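/- arXiv:2012.00990 — 6 statements merged into one kernel-verified Lean document; each statement's English description precedes it below -/
import Mathlib

section
/- Suppose ψ : (0,∞) → (0,∞) is regularly varying at infinity with index k > 0 and that a probability density f on [0,∞)^d satisfies the continuous convergence −log f(t x_t)/ψ(t) → g_*(x) as t → ∞, for every x ∈ [0,∞)^d and every sequence x_t → x, with g_* continuous. Then g_* is positively homogeneous of order k: g_*(λx) = λ^k g_*(x) for all λ > 0 and all x ∈ [0,∞)^d; consequently g = g_*^{1/k} is positively homogeneous of order 1 and has the same unit level set {x : g(x) ≤ 1} = {x : g_*(x) ≤ 1}. -/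
/-!
Homogeneity comes from regular variation alone: the limit at `λ • x` is the limit at `x` seen
at time `t λ`, rescaled by `ψ (t λ) / ψ t → λ ^ k`. The density is needed only for the sign of
`g`, on which the statements about `g ^ (1 / k)` depend. Continuous convergence makes the bound
`-log f (t • y) / ψ t < g x / 2` uniform for `y` in a neighbourhood `V` of `x` in the orthant. So
if `g x < 0`, then `f > 1` on `t • V` for all large `t`, while the volume of `t • V` is
eventually at least one. This contradicts `∫ f = 1`.
-/

open MeasureTheory Filter Topology

/-- `f` is regularly varying at infinity with index `ρ`. -/
def RegVaryingAtTop (f : ℝ → ℝ) (ρ : ℝ) : Prop :=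
  ∀ x : ℝ, 0 < x → Tendsto (fun t => f (t * x) / f t) atTop (𝓝 (x ^ ρ))

open Pointwise Function

theorem exists_tendsto_of_strictMono_of_tendsto_nhdsWithin {X : Type*} [TopologicalSpace X]
    {s : Set X} {x : X} (hx : x ∈ s) {a : ℕ → ℝ} (ha : StrictMono a) {b : ℕ → X}
    (hb : Tendsto b atTop (𝓝[s] x)) :
    ∃ xt : ℝ → X, (∀ t, xt t ∈ s) ∧ Tendsto xt atTop (𝓝 x) ∧ ∀ᶠ n in atTop, xt (a n) = b n := by
  classical
  let xt : ℝ → X := fun t => if h : ∃ n, a n = t ∧ b n ∈ s then b h.choose else x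
  have hxt : ∀ n, b n ∈ s → xt (a n) = b n := fun n hn => by
    have h : ∃ m, a m = a n ∧ b m ∈ s := ⟨n, rfl, hn⟩
    simp only [xt, dif_pos h, ha.injective h.choose_spec.1]
  refine ⟨xt, fun t => ?_, ?_, (eventually_mem_of_tendsto_nhdsWithin hb).mono hxt⟩
  · by_cases h : ∃ n, a n = t ∧ b n ∈ s
    · simpa only [xt, dif_pos h] using h.choose_spec.2
    · simpa only [xt, dif_neg h] using hx
  · refine fun W hW => mem_map.mpr ?_
    obtain ⟨N, hN⟩ := eventually_atTop.mp (tendsto_nhdsWithin_iff.mp hb |>.1 hW)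
    filter_upwards [eventually_gt_atTop (a N)] with t ht
    show xt t ∈ W
    by_cases h : ∃ n, a n = t ∧ b n ∈ s
    · simp only [xt, dif_pos h]
      exact hN _ (ha.lt_iff_lt.mp (h.choose_spec.1.symm ▸ ht)).le
    · simpa only [xt, dif_neg h] using mem_of_mem_nhds hW

theorem tendsto_uncurry_nhdsWithin_of_forall_tendsto {X Y : Type*} [TopologicalSpace X]
    [FirstCountableTopology X] [TopologicalSpace Y] {F : ℝ → X → Y} {s : Set X} {x : X} {L : Y}
    (hx : x ∈ s)
    (hF : ∀ xt : ℝ → X, (∀ t, xt t ∈ s) → Tendsto xt atTop (𝓝 x) →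
      Tendsto (fun t => F t (xt t)) atTop (𝓝 L)) :
    Tendsto (uncurry F) (atTop ×ˢ 𝓝[s] x) (𝓝 L) := by
  refine tendsto_iff_seq_tendsto.mpr fun u hu => tendsto_of_subseq_tendsto fun ns hns => ?_
  -- pass to a subsequence with strictly increasing times, which a single path `xt` interpolates
  obtain ⟨hu₁, hu₂⟩ := tendsto_prod_iff'.mp (hu.comp hns)
  obtain ⟨φ, hφ, ha⟩ := strictMono_subseq_of_tendsto_atTop hu₁
  obtain ⟨xt, hxts, hxt, hxt_eq⟩ :=
    exists_tendsto_of_strictMono_of_tendsto_nhdsWithin hx ha (hu₂.comp hφ.tendsto_atTop)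
  refine ⟨φ, ((hF xt hxts hxt).comp (hu₁.comp hφ.tendsto_atTop)).congr' ?_⟩
  filter_upwards [hxt_eq] with n hn
  simp only [comp_apply] at hn
  simp only [comp_apply, hn]
  rfl

theorem measure_pos_of_mem_nhdsWithin {X : Type*} [TopologicalSpace X] [MeasurableSpace X]
    (μ : Measure X) [μ.IsOpenPosMeasure] {s U : Set X} {x : X} (hx : x ∈ closure (interior s))
    (hU : U ∈ 𝓝[s] x) : 0 < μ U := by
  obtain ⟨V, hV, hVU⟩ := mem_nhdsWithin_iff_exists_mem_nhds_inter.mp hU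
  have hne : (interior V ∩ interior s).Nonempty :=
    mem_closure_iff_nhds.mp hx _ (interior_mem_nhds.mpr hV)
  exact (isOpen_interior.inter isOpen_interior).measure_pos μ hne |>.trans_le <|
    measure_mono fun y hy => hVU ⟨interior_subset hy.1, interior_subset hy.2⟩

theorem mem_closure_interior_orthant {d : ℕ} {x : Fin d → ℝ} (hx : ∀ j, 0 ≤ x j) :
    x ∈ closure (interior {y : Fin d → ℝ | ∀ j, 0 ≤ y j}) := by
  have h : {y : Fin d → ℝ | ∀ j, 0 ≤ y j} = Set.univ.pi fun _ => Set.Ici 0 :=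
    Set.ext fun y => ⟨fun hy j _ => hy j, fun hy j => hy j trivial⟩
  rw [h, interior_pi_set Set.finite_univ, closure_pi_set]
  simpa only [interior_Ici, closure_Ioi, Set.mem_pi, Set.mem_univ, true_implies, Set.mem_Ici]
    using hx

theorem eventually_one_le_volume_smul {d : ℕ} {V : Set (Fin d → ℝ)} (hV : 0 < volume V) :
    ∀ᶠ t : ℝ in atTop, 1 ≤ volume (t • V) := by
  rcases Nat.eq_zero_or_pos d with rfl | hd
  · have hVuniv : V = Set.univ := (nonempty_of_measure_ne_zero hV.ne').eq_univ
    filter_upwards [eventually_ne_atTop 0] with t ht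
    simp [hVuniv, Set.smul_set_univ₀ ht, volume_pi]
  · have hvol : ∀ t : ℝ, volume (t • V) = ENNReal.ofReal (|t| ^ d) * volume V := fun t => by
      rw [Measure.addHaar_smul, Module.finrank_fin_fun, abs_pow]
    have hlim : Tendsto (fun t : ℝ => ENNReal.ofReal (|t| ^ d) * volume V) atTop (𝓝 ⊤) := by
      have := ENNReal.Tendsto.mul_const (b := volume V) (ENNReal.tendsto_ofReal_atTop.comp
        ((tendsto_pow_atTop hd.ne').comp tendsto_abs_atTop_atTop)) (Or.inl ENNReal.top_ne_zero)
      rwa [ENNReal.top_mul hV.ne'] at this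
    simpa only [hvol] using hlim.eventually (eventually_ge_nhds ENNReal.one_lt_top)

theorem le_one_of_le_of_one_le_measure {α : Type*} [MeasurableSpace α] {μ : Measure α}
    {f : α → ℝ} (hf0 : ∀ y, 0 ≤ f y) (hfint : ∫ y, f y ∂μ = 1) {A : Set α} (hA : 1 ≤ μ A)
    {M : ℝ} (hM : ∀ y ∈ A, M ≤ f y) : M ≤ 1 := by
  have hfi : Integrable f μ := by
    by_contra h
    simp [integral_undef h] at hfint
  have hlint : ∫⁻ y, ENNReal.ofReal (f y) ∂μ = 1 := by
    rw [← ofReal_integral_eq_lintegral_ofReal hfi (Eventually.of_forall hf0), hfint,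
      ENNReal.ofReal_one]
  rw [← ENNReal.ofReal_le_one]
  calc ENNReal.ofReal M ≤ ENNReal.ofReal M * μ A := le_mul_of_one_le_right' hA
    _ ≤ ENNReal.ofReal M * μ {y | ENNReal.ofReal M ≤ ENNReal.ofReal (f y)} :=
      by gcongr; exact fun y hy => ENNReal.ofReal_le_ofReal (hM y hy)
    _ ≤ 1 := hlint ▸ mul_meas_ge_le_lintegral₀ hfi.aemeasurable.ennreal_ofReal _

theorem nonneg_of_tendsto_neg_log_div {d : ℕ} {ψ : ℝ → ℝ} (hψpos : ∀ t, 0 < t → 0 < ψ t)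
    {f : (Fin d → ℝ) → ℝ} (hf0 : ∀ y, 0 ≤ f y) (hfint : ∫ y, f y = 1)
    {s : Set (Fin d → ℝ)} {x : Fin d → ℝ} (hx : x ∈ closure (interior s)) {c : ℝ}
    (hc : Tendsto (uncurry fun t y => -Real.log (f (t • y)) / ψ t)
      (atTop ×ˢ 𝓝[s] x) (𝓝 c)) : 0 ≤ c := by
  by_contra! hneg
  obtain ⟨P, hP, V, hV, hbound⟩ :=
    mem_prod_iff.mp (hc.eventually (gt_mem_nhds (by linarith : c < c / 2)))
  obtain ⟨t, hPt, hVt, ht⟩ := (Filter.Eventually.and hP ((eventually_one_le_volume_smul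
    (measure_pos_of_mem_nhdsWithin volume hx hV)).and (eventually_gt_atTop 0))).exists
  have hψt := hψpos t ht
  have hpos : 0 < -(c / 2) * ψ t := mul_pos (by linarith) hψt
  have hlarge : ∀ z ∈ t • V, Real.exp (-(c / 2) * ψ t) ≤ f z := by
    rintro _ ⟨y, hy, rfl⟩
    have hlog : -(c / 2) * ψ t < Real.log (f (t • y)) := by
      have : -Real.log (f (t • y)) / ψ t < c / 2 := hbound (Set.mk_mem_prod hPt hy)
      rw [div_lt_iff₀ hψt] at this
      linarith
    have hfpos : 0 < f (t • y) := (hf0 _).lt_of_ne fun h => by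
      rw [← h, Real.log_zero] at hlog
      linarith
    exact ((Real.lt_log_iff_exp_lt hfpos).mp hlog).le
  have hexp : 1 < Real.exp (-(c / 2) * ψ t) := Real.one_lt_exp_iff.mpr hpos
  exact hexp.not_ge (le_one_of_le_of_one_le_measure hf0 hfint hVt hlarge)

theorem RegVaryingAtTop.tendsto_comp_mul_div {ψ u : ℝ → ℝ} {k a : ℝ} (hψ : RegVaryingAtTop ψ k)
    (hψ0 : ∀ᶠ t in atTop, ψ t ≠ 0) (hu : Tendsto (fun t => u t / ψ t) atTop (𝓝 a))
    {lam : ℝ} (hlam : 0 < lam) :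
    Tendsto (fun t => u (t * lam) / ψ t) atTop (𝓝 (lam ^ k * a)) := by
  have hmul : Tendsto (fun t => t * lam) atTop atTop := tendsto_id.atTop_mul_const hlam
  rw [mul_comm]
  refine ((hu.comp hmul).mul (hψ lam hlam)).congr' ?_
  filter_upwards [hmul.eventually hψ0] with t ht
  simp only [comp_apply]
  field_simp

theorem gauge_homogeneous_of_regvar_general
    {d : ℕ} (ψ : ℝ → ℝ) (hψpos : ∀ t : ℝ, 0 < t → 0 < ψ t)
    (k : ℝ) (hk : 0 < k) (hψ : RegVaryingAtTop ψ k)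
    -- `f` is a probability density on `[0,∞)^d`
    (f : (Fin d → ℝ) → ℝ) (hfnonneg : ∀ y, 0 ≤ f y)
    (hfint : ∫ y, f y = 1)
    -- continuous convergence of `-log f(t xₜ)/ψ(t)` to `g(x)`, `g` continuous
    (g : (Fin d → ℝ) → ℝ)
    (hconv : ∀ x : Fin d → ℝ, (∀ j, 0 ≤ x j) →
      ∀ xt : ℝ → (Fin d → ℝ), (∀ t, ∀ j, 0 ≤ xt t j) → Tendsto xt atTop (𝓝 x) →
        Tendsto (fun t => -Real.log (f (t • xt t)) / ψ t) atTop (𝓝 (g x))) :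
    (∀ lam : ℝ, 0 < lam → ∀ x : Fin d → ℝ, (∀ j, 0 ≤ x j) →
        g (lam • x) = lam ^ k * g x) ∧
    (∀ lam : ℝ, 0 < lam → ∀ x : Fin d → ℝ, (∀ j, 0 ≤ x j) →
        (g (lam • x)) ^ (1 / k) = lam * (g x) ^ (1 / k)) ∧
    {x : Fin d → ℝ | (∀ j, 0 ≤ x j) ∧ (g x) ^ (1 / k) ≤ 1} =
      {x : Fin d → ℝ | (∀ j, 0 ≤ x j) ∧ g x ≤ 1} := by
  have hlim : ∀ x : Fin d → ℝ, (∀ j, 0 ≤ x j) →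
      Tendsto (fun t => -Real.log (f (t • x)) / ψ t) atTop (𝓝 (g x)) :=
    fun x hx => hconv x hx (fun _ => x) (fun _ => hx) tendsto_const_nhds
  have hom : ∀ lam : ℝ, 0 < lam → ∀ x : Fin d → ℝ, (∀ j, 0 ≤ x j) →
      g (lam • x) = lam ^ k * g x := by
    intro lam hlam x hx
    have hscaled := hψ.tendsto_comp_mul_div
      ((eventually_gt_atTop 0).mono fun t ht => (hψpos t ht).ne') (hlim x hx) hlam
    simp only [mul_smul] at hscaled
    exact tendsto_nhds_unique (hlim _ fun j => mul_nonneg hlam.le (hx j)) hscaled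
  have hg0 : ∀ x : Fin d → ℝ, (∀ j, 0 ≤ x j) → 0 ≤ g x := fun x hx =>
    nonneg_of_tendsto_neg_log_div hψpos hfnonneg hfint (mem_closure_interior_orthant hx)
      (tendsto_uncurry_nhdsWithin_of_forall_tendsto hx (hconv x hx))
  refine ⟨hom, fun lam hlam x hx => ?_, ?_⟩
  · rw [hom lam hlam x hx, Real.mul_rpow (by positivity) (hg0 x hx), ← Real.rpow_mul hlam.le,
      mul_one_div_cancel hk.ne', Real.rpow_one]
  · ext x
    refine and_congr_right fun hx => ?_
    rw [← Real.rpow_le_rpow_iff (hg0 x hx) zero_le_one (one_div_pos.mpr hk), Real.one_rpow]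

/-- if `ψ ∈ RV_k^∞` with `k > 0` and a probability density `f` on `[0,∞)^d`
satisfies the continuous convergence `-log f(t xₜ)/ψ(t) → g(x)` with `g` continuous, then `g`
is positively homogeneous of order `k`; consequently `g^{1/k}` is positively homogeneous of
order `1` and has the same unit (sub)level set as `g`. -/
theorem gauge_homogeneous_of_regvar
    {d : ℕ} (ψ : ℝ → ℝ) (hψpos : ∀ t : ℝ, 0 < t → 0 < ψ t)
    (k : ℝ) (hk : 0 < k) (hψ : RegVaryingAtTop ψ k)
    -- `f` is a probability density on `[0,∞)^d`
    (f : (Fin d → ℝ) → ℝ) (hfmeas : Measurable f) (hfnonneg : ∀ y, 0 ≤ f y)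
    (hfsupp : ∀ y : Fin d → ℝ, ¬ (∀ j, 0 ≤ y j) → f y = 0)
    (hfint : ∫ y, f y = 1)
    -- continuous convergence of `-log f(t xₜ)/ψ(t)` to `g(x)`, `g` continuous
    (g : (Fin d → ℝ) → ℝ) (hgcont : ContinuousOn g {x | ∀ j, 0 ≤ x j})
    (hconv : ∀ x : Fin d → ℝ, (∀ j, 0 ≤ x j) →
      ∀ xt : ℝ → (Fin d → ℝ), (∀ t, ∀ j, 0 ≤ xt t j) → Tendsto xt atTop (𝓝 x) →
        Tendsto (fun t => -Real.log (f (t • xt t)) / ψ t) atTop (𝓝 (g x))) :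
    (∀ lam : ℝ, 0 < lam → ∀ x : Fin d → ℝ, (∀ j, 0 ≤ x j) →
        g (lam • x) = lam ^ k * g x) ∧
    (∀ lam : ℝ, 0 < lam → ∀ x : Fin d → ℝ, (∀ j, 0 ≤ x j) →
        (g (lam • x)) ^ (1 / k) = lam * (g x) ^ (1 / k)) ∧
    {x : Fin d → ℝ | (∀ j, 0 ≤ x j) ∧ (g x) ^ (1 / k) ≤ 1} =
      {x : Fin d → ℝ | (∀ j, 0 ≤ x j) ∧ g x ≤ 1} :=
  gauge_homogeneous_of_regvar_general ψ hψpos k hk hψ f hfnonneg hfint g hconv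
end

section
/- Suppose the random vector X has support in [0,∞)^d, its margins satisfy 1 − F_j(x) ~ e^{−ψ(x)} as x → ∞ for each j = 1,…,d, where e^{−ψ} is a von Mises function, and its joint survival function satisfies −log P(X ≥ tx)/ψ(t) → g_*(x) as t → ∞ for every x ∈ [0,∞)^d \ {0}. Further assume g_* is strictly increasing, in the sense that g_*(x) < g_*(y) whenever x ≤ y componentwise and x ≠ y. Then for r_n satisfying ψ(r_n) ~ log n, the sample clouds N_n = {X_1/r_n, …, X_n/r_n} converge in probability onto G = {x ∈ [0,∞)^d : g_*(x) ≤ 1}. -/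
/-!
Write `p_n(y) = P(X ≥ r_n y)`. Composing the survival asymptotics with `r_n` and using
`ψ(r_n) ~ log n` gives `p_n(y) = n ^ (-g(y) + o(1))` for `0 ≤ y ≠ 0`.

Points of the cloud far from `G`: the nonnegative points at distance `≥ ε` from the bounded set
`G` lie, by compactness, in finitely many orthants `{z ≥ y}` with `y ∉ G`, i.e. `g(y) > 1`. Then
`n p_n(y) → 0`, so by a union bound no sample point enters these orthants.

Points of `G` far from the cloud: cover `G` by finitely many boxes `[a, b]` around points
`x ∈ G`, with `a = (x - η)⁺` and `b = x + η`. Then `P(X ∈ r_n [a, b]) ≥ p_n(a) - ∑_j p_n(c_j)`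
with `c_j = a + (b_j - a_j) e_j`. Strict monotonicity gives `g(a) < g(x) ≤ 1` (unless `a = 0`,
where `p_n(a) = 1`) and `g(c_j) > g(a)`, so `p_n(c_j) = o(p_n(a))` and `n P(box) → ∞`; by
independence all `n` samples miss the box with probability `(1 - P(box))ⁿ → 0`.

When `G` is empty or unbounded, `Metric.hausdorffDist` takes the junk value `0`.
-/

open MeasureTheory Filter Topology ProbabilityTheory

/-- The `n`-point sample cloud `{X 1 / r n, …, X n / r n}` of the scaled observations. -/
def sampleCloud {Ω : Type*} {d : ℕ} (X : ℕ → Ω → (Fin d → ℝ)) (r : ℕ → ℝ)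
    (n : ℕ) (ω : Ω) : Set (Fin d → ℝ) :=
  {y | ∃ i, 1 ≤ i ∧ i ≤ n ∧ y = (r n)⁻¹ • X i ω}

/-- Convergence in probability of random sets onto a deterministic set `G`, in the sense that
the Hausdorff distance to `G` tends to `0` in probability. -/
def ConvInProbOnto {Ω : Type*} [MeasurableSpace Ω] {d : ℕ} (μ : Measure Ω)
    (N : ℕ → Ω → Set (Fin d → ℝ)) (G : Set (Fin d → ℝ)) : Prop :=
  ∀ ε : ℝ, 0 < ε →
    Tendsto (fun n => μ {ω | ε < Metric.hausdorffDist (N n ω) G}) atTop (𝓝 0)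

/-- `e^{-ψ}` is a von Mises function: `ψ` is `C²` with positive derivative and
`(1/ψ')' → 0` at infinity. -/
def IsVonMisesExp (ψ : ℝ → ℝ) : Prop :=
  ContDiff ℝ 2 ψ ∧ (∀ x, 0 < deriv ψ x) ∧
    Tendsto (deriv fun x => (deriv ψ x)⁻¹) atTop (𝓝 0)

open Set Bornology Metric

/-- `p n = n ^ (-c + o(1))`. Where `p n = 0` the quotient takes the junk value `0`. -/
def HasPolyDecayRate (p : ℕ → ℝ) (c : ℝ) : Prop :=
  Tendsto (fun n : ℕ => -Real.log (p n) / Real.log n) atTop (𝓝 c)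

namespace HasPolyDecayRate

variable {p q : ℕ → ℝ} {c c' θ : ℝ}

lemma eventually_le_rpow (h : HasPolyDecayRate p c) (hp : ∀ n, 0 ≤ p n) (hθ : θ < c) :
    ∀ᶠ n : ℕ in atTop, p n ≤ (n : ℝ) ^ (-θ) := by
  filter_upwards [h.eventually_const_lt hθ, eventually_gt_atTop 1] with n hlt hn
  have hn' : (1 : ℝ) < n := by exact_mod_cast hn
  rcases (hp n).eq_or_lt with h0 | hpos
  · rw [← h0]; positivity
  rw [← Real.log_le_log_iff hpos (by positivity), Real.log_rpow (by linarith)]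
  rw [lt_div_iff₀ (Real.log_pos hn')] at hlt
  linarith

lemma eventually_rpow_le (h : HasPolyDecayRate p c) (hp : ∀ᶠ n in atTop, 0 < p n) (hθ : c < θ) :
    ∀ᶠ n : ℕ in atTop, (n : ℝ) ^ (-θ) ≤ p n := by
  filter_upwards [h.eventually_lt_const hθ, hp, eventually_gt_atTop 1] with n hlt hpos hn
  have hn' : (1 : ℝ) < n := by exact_mod_cast hn
  rw [← Real.log_le_log_iff (by positivity) hpos, Real.log_rpow (by linarith)]
  rw [div_lt_iff₀ (Real.log_pos hn')] at hlt
  linarith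

lemma nonneg (h : HasPolyDecayRate p c) (hp0 : ∀ n, 0 ≤ p n) (hp1 : ∀ n, p n ≤ 1) : 0 ≤ c :=
  ge_of_tendsto' h fun n =>
    div_nonneg (neg_nonneg.2 (Real.log_nonpos (hp0 n) (hp1 n))) (Real.log_natCast_nonneg n)

lemma eventually_pos (h : HasPolyDecayRate p c) (hp : ∀ n, 0 ≤ p n) (hc : 0 < c) :
    ∀ᶠ n in atTop, 0 < p n := by
  filter_upwards [h.eventually_const_lt hc] with n hn
  refine (hp n).lt_of_ne fun h0 => ?_
  simp [← h0] at hn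

lemma tendsto_natCast_mul_zero (h : HasPolyDecayRate p c) (hp : ∀ n, 0 ≤ p n) (hc : 1 < c) :
    Tendsto (fun n : ℕ => n * p n) atTop (𝓝 0) := by
  obtain ⟨θ, h1θ, hθc⟩ := exists_between hc
  have hlim : Tendsto (fun n : ℕ => (n : ℝ) ^ (-(θ - 1))) atTop (𝓝 0) :=
    (tendsto_rpow_neg_atTop (sub_pos.2 h1θ)).comp tendsto_natCast_atTop_atTop
  refine squeeze_zero' (Eventually.of_forall fun n => by have := hp n; positivity) ?_ hlim
  filter_upwards [h.eventually_le_rpow hp hθc, eventually_gt_atTop 0] with n hpn hn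
  calc (n : ℝ) * p n ≤ n * (n : ℝ) ^ (-θ) := by gcongr
    _ = (n : ℝ) ^ (-(θ - 1)) := by
      rw [show -(θ - 1) = -θ + 1 by ring, Real.rpow_add_one (by positivity), mul_comm]

lemma tendsto_natCast_mul_atTop (h : HasPolyDecayRate p c) (hp : ∀ᶠ n in atTop, 0 < p n)
    (hc : c < 1) : Tendsto (fun n : ℕ => n * p n) atTop atTop := by
  obtain ⟨θ, hcθ, hθ1⟩ := exists_between hc
  refine tendsto_atTop_mono' _ ?_
    ((tendsto_rpow_atTop (sub_pos.2 hθ1)).comp tendsto_natCast_atTop_atTop)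
  filter_upwards [h.eventually_rpow_le hp hcθ, eventually_gt_atTop 0] with n hpn hn
  calc (n : ℝ) ^ (1 - θ) = n * (n : ℝ) ^ (-θ) := by
        rw [show 1 - θ = -θ + 1 by ring, Real.rpow_add_one (by positivity), mul_comm]
    _ ≤ n * p n := by gcongr

lemma tendsto_div_zero (hq : HasPolyDecayRate q c') (hq0 : ∀ n, 0 ≤ q n)
    (hp : HasPolyDecayRate p c) (hp0 : ∀ᶠ n in atTop, 0 < p n) (hcc' : c < c') :
    Tendsto (fun n => q n / p n) atTop (𝓝 0) := by
  obtain ⟨θ₁, hcθ₁, hθ₁c'⟩ := exists_between hcc'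
  obtain ⟨θ₂, hθ₁₂, hθ₂c'⟩ := exists_between hθ₁c'
  have hlim : Tendsto (fun n : ℕ => (n : ℝ) ^ (-(θ₂ - θ₁))) atTop (𝓝 0) :=
    (tendsto_rpow_neg_atTop (sub_pos.2 hθ₁₂)).comp tendsto_natCast_atTop_atTop
  refine squeeze_zero' ?_ ?_ hlim
  · filter_upwards [hp0] with n hpn using div_nonneg (hq0 n) hpn.le
  filter_upwards [hq.eventually_le_rpow hq0 hθ₂c', hp.eventually_rpow_le hp0 hcθ₁,
    eventually_gt_atTop 0] with n hqn hpn hn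
  calc q n / p n ≤ (n : ℝ) ^ (-θ₂) / (n : ℝ) ^ (-θ₁) :=
        div_le_div₀ (by positivity) hqn (by positivity) hpn
    _ = (n : ℝ) ^ (-(θ₂ - θ₁)) := by
      rw [← Real.rpow_sub (by positivity)]; ring_nf

lemma tendsto_natCast_mul_sub_sum_atTop {ι : Type*} {s : Finset ι} {P : ι → ℕ → ℝ} {κ : ι → ℝ}
    (hp : HasPolyDecayRate p c) (hp0 : ∀ᶠ n in atTop, 0 < p n) (hc : c < 1)
    (hP : ∀ j ∈ s, HasPolyDecayRate (P j) (κ j)) (hP0 : ∀ j n, 0 ≤ P j n)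
    (hcκ : ∀ j ∈ s, c < κ j) :
    Tendsto (fun n : ℕ => n * (p n - ∑ j ∈ s, P j n)) atTop atTop := by
  have hratio : Tendsto (fun n => 1 - ∑ j ∈ s, P j n / p n) atTop (𝓝 1) := by
    simpa using tendsto_const_nhds.sub (tendsto_finsetSum s fun j hj =>
      (hP j hj).tendsto_div_zero (hP0 j) hp hp0 (hcκ j hj))
  refine ((hp.tendsto_natCast_mul_atTop hp0 hc).atTop_mul_pos one_pos hratio).congr' ?_
  filter_upwards [hp0] with n hpn
  rw [← Finset.sum_div]
  field_simp

end HasPolyDecayRate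

lemma tendsto_one_sub_pow_zero {p : ℕ → ℝ} (hp1 : ∀ n, p n ≤ 1)
    (h : Tendsto (fun n : ℕ => n * p n) atTop atTop) :
    Tendsto (fun n => (1 - p n) ^ n) atTop (𝓝 0) := by
  refine squeeze_zero (fun n => pow_nonneg (sub_nonneg.2 (hp1 n)) n) (fun n => ?_)
    (Real.tendsto_exp_atBot.comp (tendsto_neg_atTop_atBot.comp h))
  calc (1 - p n) ^ n ≤ Real.exp (-p n) ^ n :=
        pow_le_pow_left₀ (sub_nonneg.2 (hp1 n)) (Real.one_sub_le_exp_neg _) n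
    _ = Real.exp (-(n * p n)) := by rw [← Real.exp_nat_mul]; ring_nf

lemma Metric.hausdorffDist_eq_zero_of_not_isBounded {E : Type*} [PseudoMetricSpace E]
    {s t : Set E} (hs : IsBounded s) (ht : ¬ IsBounded t) : hausdorffDist s t = 0 := by
  rcases s.eq_empty_or_nonempty with rfl | hne
  · exact hausdorffDist_empty'
  by_contra h
  have hfin : hausdorffEDist t s ≠ ⊤ := fun htop => h (by
    rw [hausdorffDist_comm, hausdorffDist, htop, ENNReal.toReal_top])
  refine ht ((hs.thickening (δ := hausdorffDist t s + 1)).subset fun x hx => ?_)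
  rw [mem_thickening_iff_infDist_lt hne]
  linarith [infDist_le_hausdorffDist_of_mem hx hfin]

lemma hausdorffDist_le_of_cover {E β : Type*} [PseudoMetricSpace E] {S G A : Set E}
    {B : β → Set E} {T : Set β} {ε : ℝ} (hε : 0 ≤ ε)
    (hA : ∀ z ∉ A, ∃ w ∈ G, dist z w ≤ ε) (hB : ∀ w ∈ G, ∃ x ∈ T, ∀ z ∈ B x, dist w z ≤ ε)
    (hSA : ∀ z ∈ S, z ∉ A) (hSB : ∀ x ∈ T, (S ∩ B x).Nonempty) : hausdorffDist S G ≤ ε := by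
  refine hausdorffDist_le_of_mem_dist hε (fun z hz => hA z (hSA z hz)) fun w hw => ?_
  obtain ⟨x, hxT, hx⟩ := hB w hw
  obtain ⟨z, hzS, hzB⟩ := hSB x hxT
  exact ⟨z, hzS, hx z hzB⟩

section Orthants

variable {ι : Type*}

lemma Ici_subset_Icc_union_iUnion_Ici_update [DecidableEq ι] {α : Type*} [LinearOrder α]
    (a b : ι → α) : Ici a ⊆ Icc a b ∪ ⋃ j, Ici (Function.update a j (b j)) := by
  intro v hv
  by_cases hvb : v ≤ b
  · exact Or.inl ⟨hv, hvb⟩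
  obtain ⟨j, hj⟩ : ∃ j, b j < v j := by simpa [Pi.le_def] using hvb
  exact Or.inr (mem_iUnion.2 ⟨j, update_le_iff.2 ⟨hj.le, fun k _ => hv k⟩⟩)

variable [Fintype ι]

lemma dist_le_of_mem_Icc_sub_add {x z : ι → ℝ} {δ : ℝ} (hδ : 0 ≤ δ)
    (hz : z ∈ Icc (x - fun _ => δ) (x + fun _ => δ)) : dist z x ≤ δ :=
  (dist_pi_le_iff hδ).2 fun j => by
    have h1 := hz.1 j
    have h2 := hz.2 j
    simp only [Pi.sub_apply, Pi.add_apply] at h1 h2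
    rw [Real.dist_eq, abs_sub_le_iff]
    constructor <;> linarith

lemma sub_le_of_mem_ball {x z : ι → ℝ} {δ : ℝ} (hz : z ∈ ball x δ) : (x - fun _ => δ) ≤ z :=
  fun j => by
    have := (dist_le_pi_dist z x j).trans_lt hz
    rw [Real.dist_eq, abs_lt] at this
    simp only [Pi.sub_apply]
    linarith

lemma exists_finset_orthants_of_isBounded {G : Set (ι → ℝ)} (hG : IsBounded G) {ε : ℝ}
    (hε : 0 < ε) :
    ∃ Y : Finset (ι → ℝ), (∀ y ∈ Y, 0 ≤ y ∧ y ∉ G) ∧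
      ∀ z ∉ (Ici 0)ᶜ ∪ ⋃ y ∈ Y, Ici y, ∃ w ∈ G, dist z w ≤ ε := by
  classical
  -- The far points of `[0, R + 1]ᵈ` form a compact set; the lower corners of a finite cover by
  -- `ε/2`-balls, together with the points `(R + 1) eⱼ`, give the orthants.
  obtain ⟨R, hR0, hR⟩ := hG.exists_pos_norm_le
  set K := Icc (0 : ι → ℝ) (fun _ => R + 1) ∩ ⋂ w ∈ G, {z | ε ≤ dist z w}
  have hK : IsCompact K := isCompact_Icc.inter_right
    (isClosed_biInter fun w _ => isClosed_le continuous_const (continuous_id.dist continuous_const))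
  obtain ⟨F, hFK, hFfin, hKF⟩ := finite_cover_balls_of_compact hK (half_pos hε)
  let corner : (ι → ℝ) → (ι → ℝ) := fun w => (w - fun _ => ε / 2) ⊔ 0
  refine ⟨hFfin.toFinset.image corner ∪ Finset.univ.image fun j => Pi.single j (R + 1), ?_, ?_⟩
  · simp only [Finset.mem_union, Finset.mem_image, Finite.mem_toFinset, Finset.mem_univ, true_and]
    rintro y (⟨w, hw, rfl⟩ | ⟨j, rfl⟩)
    · refine ⟨le_sup_right, fun hwG => ?_⟩
      have hw0 : 0 ≤ w := (hFK hw).1.1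
      have hcorner : dist (corner w) w ≤ ε / 2 := dist_le_of_mem_Icc_sub_add (by positivity)
        ⟨le_sup_left, sup_le (sub_le_self _ (fun _ => by positivity)) hw0 |>.trans
          (le_add_of_nonneg_right fun _ => by positivity)⟩
      have hfar : ε ≤ dist w (corner w) := mem_iInter₂.1 (hFK hw).2 _ hwG
      linarith [dist_comm w (corner w)]
    · refine ⟨Pi.single_nonneg.2 (by linarith), fun hG' => ?_⟩
      have := (norm_le_pi_norm (Pi.single j (R + 1)) j).trans (hR _ hG')
      rw [Pi.single_eq_same, Real.norm_eq_abs, abs_of_pos (by linarith)] at this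
      linarith
  · intro z hz
    simp only [mem_union, mem_compl_iff, mem_Ici, not_or, not_not, mem_iUnion₂,
      not_exists] at hz
    obtain ⟨hz0, hzY⟩ := hz
    by_contra! hfar
    have hzK : z ∈ K := ⟨⟨hz0, fun j => ?_⟩, mem_iInter₂.2 fun w hw => (hfar w hw).le⟩
    · obtain ⟨w, hwF, hzw⟩ := mem_iUnion₂.1 (hKF hzK)
      exact hzY (corner w) (Finset.mem_union_left _ (Finset.mem_image_of_mem _
        (hFfin.mem_toFinset.2 hwF))) (sup_le (sub_le_of_mem_ball hzw) hz0)
    by_contra! hzj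
    refine hzY _ (Finset.mem_union_right _ (Finset.mem_image_of_mem _ (Finset.mem_univ j))) ?_
    exact update_le_iff.2 ⟨hzj.le, fun k _ => hz0 k⟩

lemma exists_finset_boxes_of_isBounded {G : Set (ι → ℝ)} (hG : IsBounded G) {ε : ℝ}
    (hε : 0 < ε) :
    ∃ T : Finset (ι → ℝ), (∀ x ∈ T, x ∈ G) ∧
      ∀ w ∈ G, ∃ x ∈ T, ∀ z ∈ Icc ((x - fun _ => ε / 4) ⊔ 0) (x + fun _ => ε / 4),
        dist w z ≤ ε := by
  obtain ⟨T, hTG, hTfin, hTnet⟩ := finite_approx_of_totallyBounded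
    (hG.isCompact_closure.totallyBounded.subset subset_closure) (ε / 2) (half_pos hε)
  refine ⟨hTfin.toFinset, fun x hx => hTG (hTfin.mem_toFinset.1 hx), fun w hw => ?_⟩
  obtain ⟨x, hxT, hwx⟩ := mem_iUnion₂.1 (hTnet hw)
  refine ⟨x, hTfin.mem_toFinset.2 hxT, fun z hz => ?_⟩
  have hzx := dist_le_of_mem_Icc_sub_add (by positivity) ⟨le_sup_left.trans hz.1, hz.2⟩
  linarith [dist_triangle_right w z x, mem_ball.1 hwx]

end Orthants

section IID

variable {Ω E : Type*} [MeasurableSpace Ω] [MeasurableSpace E] {μ : Measure Ω}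
  {X : ℕ → Ω → E} {S : Set E}

lemma measureReal_biUnion_Icc_preimage_le (hident : ∀ i, IdentDistrib (X i) (X 0) μ μ)
    (hS : MeasurableSet S) (n : ℕ) :
    μ.real (⋃ i ∈ Finset.Icc 1 n, X i ⁻¹' S) ≤ n * μ.real (X 0 ⁻¹' S) := by
  refine (measureReal_biUnion_finset_le _ _).trans_eq ?_
  simp [measureReal_def, (hident _).measure_mem_eq hS]

lemma measureReal_biInter_Icc_preimage (hindep : iIndepFun X μ)
    (hident : ∀ i, IdentDistrib (X i) (X 0) μ μ) (hS : MeasurableSet S) (n : ℕ) :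
    μ.real (⋂ i ∈ Finset.Icc 1 n, X i ⁻¹' S) = μ.real (X 0 ⁻¹' S) ^ n := by
  rw [measureReal_def, hindep.meas_biInter fun i _ => ⟨S, hS, rfl⟩,
    Finset.prod_congr rfl fun i _ => (hident i).measure_mem_eq hS, Finset.prod_const,
    Nat.card_Icc, Nat.add_sub_cancel, ENNReal.toReal_pow, measureReal_def]

end IID

lemma sampleCloud_finite {Ω : Type*} {d : ℕ} (X : ℕ → Ω → (Fin d → ℝ)) (r : ℕ → ℝ) (n : ℕ)
    (ω : Ω) : (sampleCloud X r n ω).Finite :=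
  ((finite_Icc 1 n).image fun i => (r n)⁻¹ • X i ω).subset
    fun _ ⟨i, h1, h2, hy⟩ => ⟨i, ⟨h1, h2⟩, hy.symm⟩

lemma hausdorffDist_sampleCloud_eq_zero {Ω : Type*} {d : ℕ} (X : ℕ → Ω → (Fin d → ℝ))
    (r : ℕ → ℝ) (n : ℕ) (ω : Ω) {G : Set (Fin d → ℝ)} (hG : ¬ (IsBounded G ∧ G.Nonempty)) :
    hausdorffDist (sampleCloud X r n ω) G = 0 := by
  rcases not_and_or.1 hG with hGb | hG0
  · exact hausdorffDist_eq_zero_of_not_isBounded (sampleCloud_finite X r n ω).isBounded hGb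
  · rw [not_nonempty_iff_eq_empty.1 hG0, hausdorffDist_empty]

lemma measureReal_hausdorffDist_sampleCloud_gt_le {Ω : Type*} [MeasurableSpace Ω]
    {μ : Measure Ω} [IsProbabilityMeasure μ] {d : ℕ} {X : ℕ → Ω → (Fin d → ℝ)}
    (hindep : iIndepFun X μ) (hident : ∀ i, IdentDistrib (X i) (X 0) μ μ) (r : ℕ → ℝ) (n : ℕ)
    {G A : Set (Fin d → ℝ)} {T : Finset (Fin d → ℝ)} {B : (Fin d → ℝ) → Set (Fin d → ℝ)}
    {ε : ℝ} (hε : 0 ≤ ε) (hA : MeasurableSet A) (hB : ∀ x ∈ T, MeasurableSet (B x))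
    (hAG : ∀ z ∉ A, ∃ w ∈ G, dist z w ≤ ε) (hBG : ∀ w ∈ G, ∃ x ∈ T, ∀ z ∈ B x, dist w z ≤ ε) :
    μ.real {ω | ε < hausdorffDist (sampleCloud X r n ω) G} ≤
      n * μ.real {ω | (r n)⁻¹ • X 0 ω ∈ A} +
        ∑ x ∈ T, (1 - μ.real {ω | (r n)⁻¹ • X 0 ω ∈ B x}) ^ n := by
  set φ : (Fin d → ℝ) → (Fin d → ℝ) := fun v => (r n)⁻¹ • v
  have hφ : Measurable φ := measurable_const_smul _
  have hsub : {ω | ε < hausdorffDist (sampleCloud X r n ω) G} ⊆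
      (⋃ i ∈ Finset.Icc 1 n, X i ⁻¹' (φ ⁻¹' A)) ∪
        ⋃ x ∈ T, ⋂ i ∈ Finset.Icc 1 n, X i ⁻¹' (φ ⁻¹' B x)ᶜ := by
    intro ω hω
    by_contra hcov
    simp only [mem_union, mem_iUnion, mem_iInter, mem_preimage, mem_compl_iff, Finset.mem_Icc,
      not_or, not_exists, not_forall, not_not] at hcov
    refine (not_le.2 hω) (hausdorffDist_le_of_cover hε hAG hBG ?_ fun x hx => ?_)
    · rintro _ ⟨i, hi1, hi2, rfl⟩
      exact hcov.1 i ⟨hi1, hi2⟩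
    · obtain ⟨i, ⟨hi1, hi2⟩, hiB⟩ := hcov.2 x hx
      exact ⟨_, ⟨i, hi1, hi2, rfl⟩, hiB⟩
  calc μ.real {ω | ε < hausdorffDist (sampleCloud X r n ω) G}
      ≤ μ.real (⋃ i ∈ Finset.Icc 1 n, X i ⁻¹' (φ ⁻¹' A)) +
          μ.real (⋃ x ∈ T, ⋂ i ∈ Finset.Icc 1 n, X i ⁻¹' (φ ⁻¹' B x)ᶜ) :=
        (measureReal_mono hsub).trans (measureReal_union_le _ _)
    _ ≤ _ := by
      gcongr
      · exact measureReal_biUnion_Icc_preimage_le hident (hφ hA) n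
      refine (measureReal_biUnion_finset_le _ _).trans_eq (Finset.sum_congr rfl fun x hx => ?_)
      rw [measureReal_biInter_Icc_preimage hindep hident (hφ (hB x hx)).compl,
        preimage_compl,
        probReal_compl_eq_one_sub₀ ((hident 0).aemeasurable_fst.nullMeasurableSet_preimage
          (hφ (hB x hx)))]
      rfl

section SurvivalModel

variable {Ω ι : Type*} [MeasurableSpace Ω]

def scaledSurvival (μ : Measure Ω) (X : Ω → ι → ℝ) (r : ℕ → ℝ) (y : ι → ℝ) (n : ℕ) : ℝ :=
  μ.real {ω | y ≤ (r n)⁻¹ • X ω}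

variable {μ : Measure Ω} {X : Ω → ι → ℝ} {r : ℕ → ℝ} {g : (ι → ℝ) → ℝ}

lemma hasPolyDecayRate_scaledSurvival {ψ : ℝ → ℝ}
    (hconv : ∀ x : ι → ℝ, 0 ≤ x → x ≠ 0 →
      Tendsto (fun t => -Real.log (μ.real {ω | ∀ j, t * x j ≤ X ω j}) / ψ t) atTop (𝓝 (g x)))
    (hr : Tendsto r atTop atTop) (hrψ : Tendsto (fun n => ψ (r n) / Real.log n) atTop (𝓝 1))
    {y : ι → ℝ} (hy : 0 ≤ y) (hy0 : y ≠ 0) :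
    HasPolyDecayRate (scaledSurvival μ X r y) (g y) := by
  have h := ((hconv y hy hy0).comp hr).mul hrψ
  rw [mul_one] at h
  refine h.congr' ?_
  filter_upwards [hr.eventually_gt_atTop 0, hrψ.eventually_ne one_ne_zero] with n hrn hψ
  obtain ⟨hψ0, hlog0⟩ := div_ne_zero_iff.1 hψ
  have hset : {ω | ∀ j, r n * y j ≤ X ω j} = {ω | y ≤ (r n)⁻¹ • X ω} := by
    ext ω
    simp [Pi.le_def, le_inv_mul_iff₀ hrn]
  simp only [Function.comp_apply, scaledSurvival, hset]
  field_simp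

lemma scaledSurvival_nonneg (y : ι → ℝ) (n : ℕ) : 0 ≤ scaledSurvival μ X r y n :=
  measureReal_nonneg

lemma scaledSurvival_le_one [IsProbabilityMeasure μ] (y : ι → ℝ) (n : ℕ) :
    scaledSurvival μ X r y n ≤ 1 :=
  measureReal_le_one

lemma pos_of_hasPolyDecayRate_scaledSurvival [IsProbabilityMeasure μ]
    (hrate : ∀ y, 0 ≤ y → y ≠ 0 → HasPolyDecayRate (scaledSurvival μ X r y) (g y))
    (hg : StrictMonoOn g (Ici 0)) {y : ι → ℝ} (hy : 0 ≤ y) (hy0 : y ≠ 0) : 0 < g y := by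
  have hhalf0 : 0 ≤ (2⁻¹ : ℝ) • y := smul_nonneg (by norm_num) hy
  have hhalf_ne : (2⁻¹ : ℝ) • y ≠ 0 := smul_ne_zero (by norm_num) hy0
  have hhalf_lt : (2⁻¹ : ℝ) • y < y := by
    refine lt_of_le_of_ne (smul_le_of_le_one_left hy (by norm_num)) fun h => hy0 ?_
    have := congrArg (fun v => (2 : ℝ) • v - v) h
    simpa [smul_smul, two_smul] using this
  have hrate_half := (hrate _ hhalf0 hhalf_ne).nonneg (scaledSurvival_nonneg _)
    (scaledSurvival_le_one _)
  exact hrate_half.trans_lt (hg hhalf0 hy hhalf_lt)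

lemma tendsto_natCast_mul_measureReal_orthants [IsProbabilityMeasure μ]
    (hrate : ∀ y, 0 ≤ y → y ≠ 0 → HasPolyDecayRate (scaledSurvival μ X r y) (g y))
    (hsupp : ∀ᵐ ω ∂μ, 0 ≤ X ω) (hr : ∀ᶠ n in atTop, 0 ≤ r n) (hg0 : g 0 ≤ 1)
    {Y : Finset (ι → ℝ)} (hY : ∀ y ∈ Y, 0 ≤ y ∧ y ∉ {x | 0 ≤ x ∧ g x ≤ 1}) :
    Tendsto (fun n : ℕ => n * μ.real {ω | (r n)⁻¹ • X ω ∈ (Ici 0)ᶜ ∪ ⋃ y ∈ Y, Ici y})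
      atTop (𝓝 0) := by
  have hY0 : ∀ y ∈ Y, y ≠ 0 := by
    rintro y hy rfl
    exact (hY 0 hy).2 ⟨le_rfl, hg0⟩
  have hY1 : ∀ y ∈ Y, 1 < g y := fun y hy => not_le.1 fun h => (hY y hy).2 ⟨(hY y hy).1, h⟩
  have hsum : Tendsto (fun n : ℕ => ∑ y ∈ Y, n * scaledSurvival μ X r y n) atTop (𝓝 0) := by
    simpa using tendsto_finsetSum Y fun y hy =>
      (hrate y (hY y hy).1 (hY0 y hy)).tendsto_natCast_mul_zero (scaledSurvival_nonneg y)
        (hY1 y hy)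
  refine squeeze_zero' (Eventually.of_forall fun n => by positivity) ?_ hsum
  filter_upwards [hr] with n hrn
  rw [← Finset.mul_sum]
  gcongr
  have hsub : {ω | (r n)⁻¹ • X ω ∈ (Ici 0)ᶜ} ⊆ {ω | ¬ 0 ≤ X ω} :=
    fun ω hω hX => hω (smul_nonneg (inv_nonneg.2 hrn) hX)
  have hnull : μ.real {ω | (r n)⁻¹ • X ω ∈ (Ici 0)ᶜ} = 0 :=
    (measureReal_eq_zero_iff).2 (measure_mono_null hsub (ae_iff.1 hsupp))
  calc μ.real {ω | (r n)⁻¹ • X ω ∈ (Ici 0)ᶜ ∪ ⋃ y ∈ Y, Ici y}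
      ≤ μ.real {ω | (r n)⁻¹ • X ω ∈ (Ici 0)ᶜ} + μ.real (⋃ y ∈ Y, {ω | y ≤ (r n)⁻¹ • X ω}) := by
        refine (measureReal_mono fun ω hω => ?_).trans (measureReal_union_le _ _)
        simpa using hω
    _ ≤ ∑ y ∈ Y, scaledSurvival μ X r y n := by
        rw [hnull, zero_add]
        exact measureReal_biUnion_finset_le _ _

lemma exists_hasPolyDecayRate_scaledSurvival_lt_one [IsProbabilityMeasure μ]
    (hrate : ∀ y, 0 ≤ y → y ≠ 0 → HasPolyDecayRate (scaledSurvival μ X r y) (g y))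
    (hg : StrictMonoOn g (Ici 0)) (hsupp : ∀ᵐ ω ∂μ, 0 ≤ X ω) (hr : ∀ᶠ n in atTop, 0 ≤ r n)
    {a : ι → ℝ} (ha : 0 ≤ a) (hga : a ≠ 0 → g a < 1) :
    ∃ γ < 1, HasPolyDecayRate (scaledSurvival μ X r a) γ ∧
      (∀ᶠ n in atTop, 0 < scaledSurvival μ X r a n) ∧ ∀ c, a < c → γ < g c := by
  rcases eq_or_ne a 0 with rfl | ha0
  · have hone : ∀ᶠ n in atTop, scaledSurvival μ X r 0 n = 1 := by
      filter_upwards [hr] with n hrn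
      have hae : ∀ᵐ ω ∂μ, 0 ≤ (r n)⁻¹ • X ω :=
        hsupp.mono fun ω hX => smul_nonneg (inv_nonneg.2 hrn) hX
      rw [scaledSurvival, measureReal_def, measure_congr (ae_eq_univ.2 hae), measure_univ,
        ENNReal.toReal_one]
    refine ⟨0, one_pos, tendsto_const_nhds.congr' ?_, hone.mono fun n h => h ▸ one_pos,
      fun c hc => pos_of_hasPolyDecayRate_scaledSurvival hrate hg hc.le hc.ne'⟩
    filter_upwards [hone] with n h
    simp [h]
  · have hrate_a := hrate a ha ha0
    exact ⟨g a, hga ha0, hrate_a, hrate_a.eventually_pos (scaledSurvival_nonneg a)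
      (pos_of_hasPolyDecayRate_scaledSurvival hrate hg ha ha0),
      fun c hc => hg ha (ha.trans hc.le) hc⟩

lemma tendsto_one_sub_measureReal_Icc_pow [IsProbabilityMeasure μ] [Fintype ι] [DecidableEq ι]
    (hrate : ∀ y, 0 ≤ y → y ≠ 0 → HasPolyDecayRate (scaledSurvival μ X r y) (g y))
    (hg : StrictMonoOn g (Ici 0)) (hsupp : ∀ᵐ ω ∂μ, 0 ≤ X ω) (hr : ∀ᶠ n in atTop, 0 ≤ r n)
    {x : ι → ℝ} (hx : 0 ≤ x) (hgx : g x ≤ 1) {η : ℝ} (hη : 0 < η) :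
    Tendsto (fun n : ℕ => (1 - μ.real {ω | (r n)⁻¹ • X ω ∈
      Icc ((x - fun _ => η) ⊔ 0) (x + fun _ => η)}) ^ n) atTop (𝓝 0) := by
  set a := (x - fun _ => η) ⊔ 0
  set b := x + fun _ => η
  have ha0 : 0 ≤ a := le_sup_right
  have hax : a ≤ x := sup_le (sub_le_self _ fun _ => hη.le) hx
  have hga : a ≠ 0 → g a < 1 := by
    intro ha
    refine (hg ha0 hx (hax.lt_of_ne fun h => ha ?_)).trans_le hgx
    rw [h]
    ext j
    have hj : (x j - η) ⊔ 0 = x j := congrFun h j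
    rcases le_total (x j - η) 0 with hle | hle
    · rw [sup_eq_right.2 hle] at hj
      exact hj.symm
    · rw [sup_eq_left.2 hle] at hj
      linarith
  have hc : ∀ j, a < Function.update a j (b j) := fun j => lt_update_self_iff.2
    (sup_lt_iff.2 ⟨by simp [b]; linarith, by simp [b]; linarith [show 0 ≤ x j from hx j]⟩)
  obtain ⟨γ, hγ1, hγ, hpos, hγc⟩ :=
    exists_hasPolyDecayRate_scaledSurvival_lt_one hrate hg hsupp hr ha0 hga
  refine tendsto_one_sub_pow_zero (fun n => measureReal_le_one) (tendsto_atTop_mono' _ ?_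
    (hγ.tendsto_natCast_mul_sub_sum_atTop hpos hγ1 (s := Finset.univ)
      (fun j _ => hrate _ (ha0.trans (hc j).le) (ha0.trans_lt (hc j)).ne')
      (fun j => scaledSurvival_nonneg _) (fun j _ => hγc _ (hc j))))
  filter_upwards with n
  have hcover : scaledSurvival μ X r a n ≤ μ.real {ω | (r n)⁻¹ • X ω ∈ Icc a b} +
      ∑ j, scaledSurvival μ X r (Function.update a j (b j)) n := by
    refine (measureReal_mono fun ω hω => ?_).trans ((measureReal_union_le _ _).trans
      (add_le_add_right (measureReal_iUnion_fintype_le _) _))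
    simpa using Ici_subset_Icc_union_iUnion_Ici_update a b hω
  gcongr
  linarith

end SurvivalModel

theorem limit_set_from_survival_general
    {Ω : Type*} [MeasurableSpace Ω] (μ : Measure Ω) [IsProbabilityMeasure μ]
    {d : ℕ} (X : ℕ → Ω → (Fin d → ℝ)) (hXmeas : ∀ i, Measurable (X i))
    -- i.i.d. copies of a random vector supported on [0,∞)^d
    (hindep : iIndepFun X μ)
    (hident : ∀ i, Measure.map (X i) μ = Measure.map (X 0) μ)
    (hsupp : ∀ᵐ ω ∂μ, ∀ j, 0 ≤ X 0 ω j)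
    (ψ : ℝ → ℝ)
    -- convergence of the joint survival function
    (g : (Fin d → ℝ) → ℝ)
    (hconv : ∀ x : Fin d → ℝ, (∀ j, 0 ≤ x j) → x ≠ 0 →
      Tendsto (fun t => -Real.log ((μ {ω | ∀ j, t * x j ≤ X 0 ω j}).toReal) / ψ t)
        atTop (𝓝 (g x)))
    -- strict monotonicity of g
    (hmono : ∀ x y : Fin d → ℝ, (∀ j, 0 ≤ x j) → (∀ j, x j ≤ y j) → x ≠ y → g x < g y)
    -- scaling sequence with ψ(rₙ) ~ log n
    (r : ℕ → ℝ) (hr : Tendsto r atTop atTop)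
    (hrψ : Tendsto (fun n => ψ (r n) / Real.log n) atTop (𝓝 1)) :
    ConvInProbOnto μ (sampleCloud X r) {x | (∀ j, 0 ≤ x j) ∧ g x ≤ 1} := by
  intro ε hε
  set G : Set (Fin d → ℝ) := {x | (∀ j, 0 ≤ x j) ∧ g x ≤ 1}
  by_cases hG : IsBounded G ∧ G.Nonempty
  swap
  · simp [hausdorffDist_sampleCloud_eq_zero X r _ _ hG, not_lt.2 hε.le]
  obtain ⟨hGb, x₀, hx₀⟩ := hG
  have hg : StrictMonoOn g (Ici 0) := fun x hx y _ hxy => hmono x y hx hxy.le hxy.ne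
  have hg0 : g 0 ≤ 1 := (hg.monotoneOn (le_refl (0 : Fin d → ℝ)) hx₀.1 hx₀.1).trans hx₀.2
  have hrate := fun y => hasPolyDecayRate_scaledSurvival (X := X 0) hconv hr hrψ (y := y)
  have hr0 : ∀ᶠ n in atTop, 0 ≤ r n := hr.eventually_ge_atTop 0
  have hident' : ∀ i, IdentDistrib (X i) (X 0) μ μ :=
    fun i => ⟨(hXmeas i).aemeasurable, (hXmeas 0).aemeasurable, hident i⟩
  obtain ⟨Y, hYG, hAG⟩ := exists_finset_orthants_of_isBounded hGb hε
  obtain ⟨T, hTG, hBG⟩ := exists_finset_boxes_of_isBounded hGb hε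
  have hlim := (tendsto_natCast_mul_measureReal_orthants hrate hsupp hr0 hg0 hYG).add
    (tendsto_finsetSum T fun x hx => tendsto_one_sub_measureReal_Icc_pow hrate hg hsupp hr0
      (hTG x hx).1 (hTG x hx).2 (by positivity : 0 < ε / 4))
  rw [Finset.sum_const_zero, add_zero] at hlim
  refine (ENNReal.tendsto_toReal_iff (fun _ => measure_ne_top μ _) ENNReal.zero_ne_top).1 ?_
  exact squeeze_zero (fun _ => ENNReal.toReal_nonneg) (fun n =>
    measureReal_hausdorffDist_sampleCloud_gt_le hindep hident' r n hε.le
      (measurableSet_Ici.compl.union (.biUnion Y.countable_toSet fun _ _ => measurableSet_Ici))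
      (fun _ _ => measurableSet_Icc) hAG hBG) hlim

/-- Proposition 4 of the paper, after Davis–Mulrow–Resnick: if the margins of
`X` are asymptotically equal to a von Mises function `e^{-ψ}` and the joint survival function
satisfies `-log P(X ≥ tx)/ψ(t) → g(x)` with `g` strictly increasing, then with `ψ(rₙ) ~ log n`
the sample clouds converge in probability onto `G = {x ∈ [0,∞)^d : g(x) ≤ 1}`. -/
theorem limit_set_from_survival
    {Ω : Type*} [MeasurableSpace Ω] (μ : Measure Ω) [IsProbabilityMeasure μ]
    {d : ℕ} (X : ℕ → Ω → (Fin d → ℝ)) (hXmeas : ∀ i, Measurable (X i))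
    -- i.i.d. copies of a random vector supported on [0,∞)^d
    (hindep : iIndepFun X μ)
    (hident : ∀ i, Measure.map (X i) μ = Measure.map (X 0) μ)
    (hsupp : ∀ᵐ ω ∂μ, ∀ j, 0 ≤ X 0 ω j)
    -- marginal tails asymptotically equal to a von Mises function
    (ψ : ℝ → ℝ) (hvM : IsVonMisesExp ψ)
    (hmarg : ∀ j, Tendsto (fun x => (μ {ω | x < X 0 ω j}).toReal / Real.exp (-ψ x))
      atTop (𝓝 1))
    -- convergence of the joint survival function
    (g : (Fin d → ℝ) → ℝ)
    (hconv : ∀ x : Fin d → ℝ, (∀ j, 0 ≤ x j) → x ≠ 0 →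
      Tendsto (fun t => -Real.log ((μ {ω | ∀ j, t * x j ≤ X 0 ω j}).toReal) / ψ t)
        atTop (𝓝 (g x)))
    -- strict monotonicity of g
    (hmono : ∀ x y : Fin d → ℝ, (∀ j, 0 ≤ x j) → (∀ j, x j ≤ y j) → x ≠ y → g x < g y)
    -- scaling sequence with ψ(rₙ) ~ log n
    (r : ℕ → ℝ) (hr : Tendsto r atTop atTop)
    (hrψ : Tendsto (fun n => ψ (r n) / Real.log n) atTop (𝓝 1)) :
    ConvInProbOnto μ (sampleCloud X r) {x | (∀ j, 0 ≤ x j) ∧ g x ≤ 1} :=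
  limit_set_from_survival_general μ X hXmeas hindep hident hsupp ψ g hconv hmono r hr hrψ
end

section
/- Let G be a two-dimensional limit set whose gauge function g has piecewise-continuous partial derivatives possessing finite left and right limits, and suppose the conditional extremes setup holds with α₁ = lim a¹(t)/t and β₁ ≤ 1 defined by u ↦ g(1, α₁ + u) − 1 ∈ RV^0_{1/(1−β₁)}. Write g₂(1,(α₁)₊) = lim_{u→0⁺} (g(1, α₁ + u) − g(1, α₁))/u ≥ 0. Then: (i) β₁ ≥ 0 if g₂(1,(α₁)₊) = 0; (ii) β₁ = 0 if 0 < g₂(1,(α₁)₊) < ∞; furthermore, if α₁ > 0 then 0 ≤ g₂(1,(α₁)₊) < ∞, so that β₁ ≥ 0. Analogous statements hold for α₂, β₂. -/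
open Filter Topology

/-- `f` is regularly varying at zero (from the right) with index `ρ`. -/
def RegVaryingAtZero (f : ℝ → ℝ) (ρ : ℝ) : Prop :=
  ∀ x : ℝ, 0 < x → Tendsto (fun t => f (t * x) / f t) (𝓝[>] 0) (𝓝 (x ^ ρ))

/-!
Put `f u = g (1, α + u) - 1`. As `f` is regularly varying at `0` with index `ρ = 1 / (1 - β)`,
the difference quotient `f u / u` is regularly varying with index `ρ - 1`. A function regularly
varying at `0` with a finite nonzero limit there has index `0`, and one tending to `0` has
nonnegative index. Hence `g₂ = 0` forces `ρ ≥ 1`, i.e. `β ≥ 0`, and `0 < g₂ < ∞` forces `ρ = 1`, i.e. `β = 0`.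
Above the ray through `(1, α)` the gauge function agrees with a `C¹` piece, so the one-sided
derivative `g₂` exists; it is nonnegative since `g (1, α + u) ≥ max 1 (α + u) ≥ 1 = g (1, α)`.
-/

open Set

theorem tendsto_mul_const_nhdsGT_zero {x : ℝ} (hx : 0 < x) :
    Tendsto (fun t : ℝ => t * x) (𝓝[>] 0) (𝓝[>] 0) := by
  refine tendsto_nhdsWithin_iff.mpr ⟨?_, ?_⟩
  · simpa using (tendsto_id.mul_const x).mono_left (nhdsWithin_le_nhds (a := (0 : ℝ)))
  · filter_upwards [self_mem_nhdsWithin] with t ht using mul_pos ht hx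

namespace RegVaryingAtZero

variable {f F : ℝ → ℝ} {ρ σ c : ℝ}

theorem div_id (hf : RegVaryingAtZero f ρ) : RegVaryingAtZero (fun u => f u / u) (ρ - 1) := by
  intro x hx
  have hlim := (hf x hx).div_const x
  rw [← Real.rpow_sub_one hx.ne'] at hlim
  refine hlim.congr' ?_
  filter_upwards [self_mem_nhdsWithin] with t ht
  have ht : t ≠ 0 := ne_of_gt ht
  field_simp

theorem index_eq_zero_of_tendsto (hF : RegVaryingAtZero F σ) (hc : c ≠ 0)
    (h : Tendsto F (𝓝[>] 0) (𝓝 c)) : σ = 0 := by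
  have hratio : Tendsto (fun t => F (t * 2) / F t) (𝓝[>] 0) (𝓝 (c / c)) :=
    (h.comp (tendsto_mul_const_nhdsGT_zero two_pos)).div h hc
  rw [div_self hc] at hratio
  have h2 : (2 : ℝ) ^ σ = 2 ^ (0 : ℝ) := by
    rw [Real.rpow_zero]; exact tendsto_nhds_unique (hF 2 two_pos) hratio
  exact (Real.rpow_right_inj two_pos (by norm_num)).mp h2

theorem index_nonneg_of_tendsto_zero (hF : RegVaryingAtZero F σ)
    (h : Tendsto F (𝓝[>] 0) (𝓝 0)) : 0 ≤ σ := by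
  by_contra! hσ
  -- halving `t` multiplies `|F t|` by about `2 ^ (-σ) > 1`, so `|F|` blows up along `δ / 2 ^ n`
  have hgrow : 1 < (1 / 2 : ℝ) ^ σ :=
    Real.one_lt_rpow_of_pos_of_lt_one_of_neg (by norm_num) (by norm_num) hσ
  obtain ⟨q, hq1, hq⟩ := exists_between hgrow
  obtain ⟨δ, hδ, hsub⟩ := mem_nhdsGT_iff_exists_Ioc_subset.mp
    ((hF (1 / 2) (by norm_num)).eventually (eventually_gt_nhds hq))
  have hne : ∀ t ∈ Ioc 0 δ, F t ≠ 0 := by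
    intro t ht h0
    have hratio : q < F (t * (1 / 2)) / F t := hsub ht
    rw [h0, div_zero] at hratio
    linarith
  have hstep : ∀ t ∈ Ioc 0 δ, q * |F t| ≤ |F (t * (1 / 2))| := by
    intro t ht
    have hratio : q < F (t * (1 / 2)) / F t := hsub ht
    calc q * |F t| ≤ |F (t * (1 / 2)) / F t| * |F t| := by
          gcongr; exact hratio.le.trans (le_abs_self _)
      _ = |F (t * (1 / 2))| := by
          rw [abs_div, div_mul_cancel₀ _ (abs_ne_zero.mpr (hne t ht))]
  have hu_mem : ∀ n : ℕ, δ * (1 / 2) ^ n ∈ Ioc 0 δ := fun n =>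
    ⟨mul_pos hδ (by norm_num),
      mul_le_of_le_one_right hδ.le (pow_le_one₀ (by norm_num) (by norm_num))⟩
  have htop : Tendsto (fun n : ℕ => |F (δ * (1 / 2) ^ n)|) atTop atTop := by
    refine tendsto_atTop_of_geom_le (abs_pos.mpr (by simpa using hne δ ⟨hδ, le_rfl⟩)) hq1
      fun n => ?_
    rw [pow_succ, ← mul_assoc]
    exact hstep _ (hu_mem n)
  have hu_lim : Tendsto (fun n : ℕ => δ * (1 / 2) ^ n) atTop (𝓝[>] 0) := by
    refine tendsto_nhdsWithin_iff.mpr ⟨?_, Eventually.of_forall fun n => (hu_mem n).1⟩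
    simpa using (tendsto_pow_atTop_nhds_zero_of_lt_one (by norm_num : (0 : ℝ) ≤ 1 / 2)
      (by norm_num)).const_mul δ
  have hzero : Tendsto (fun n : ℕ => |F (δ * (1 / 2) ^ n)|) atTop (𝓝 0) := by
    simpa using (h.comp hu_lim).abs
  exact not_tendsto_nhds_of_tendsto_atTop htop 0 hzero

end RegVaryingAtZero

section BetaSign

variable {f : ℝ → ℝ} {β c : ℝ}

theorem beta_nonneg_of_tendsto_div_zero (hβ : β ≤ 1) (hRV : RegVaryingAtZero f (1 / (1 - β)))
    (hlim : Tendsto (fun u => f u / u) (𝓝[>] 0) (𝓝 0)) : 0 ≤ β := by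
  have h1 : 1 ≤ 1 / (1 - β) := by linarith [hRV.div_id.index_nonneg_of_tendsto_zero hlim]
  rcases hβ.lt_or_eq with hlt | rfl
  · rw [le_div_iff₀ (by linarith)] at h1
    linarith
  · exact zero_le_one

theorem beta_eq_zero_of_tendsto_div (hRV : RegVaryingAtZero f (1 / (1 - β))) (hc : c ≠ 0)
    (hlim : Tendsto (fun u => f u / u) (𝓝[>] 0) (𝓝 c)) : β = 0 := by
  have h1 : 1 / (1 - β) = 1 := by linarith [hRV.div_id.index_eq_zero_of_tendsto hc hlim]
  rw [one_div, inv_eq_one] at h1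
  linarith

end BetaSign

theorem beta_sign_of_exists_rightDeriv {h : ℝ → ℝ} {α β : ℝ} (hα : h α = 1)
    (hge : ∀ u, 0 < u → 1 ≤ h (α + u)) (hβ : β ≤ 1)
    (hRV : RegVaryingAtZero (fun u => h (α + u) - 1) (1 / (1 - β)))
    (hderiv : ∃ c, Tendsto (fun u => (h (α + u) - h α) / u) (𝓝[>] 0) (𝓝 c)) :
    (Tendsto (fun u => (h (α + u) - h α) / u) (𝓝[>] 0) (𝓝 0) → 0 ≤ β) ∧
      (∀ c : ℝ, 0 < c → Tendsto (fun u => (h (α + u) - h α) / u) (𝓝[>] 0) (𝓝 c) → β = 0) ∧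
      (∀ c : ℝ, Tendsto (fun u => (h (α + u) - h α) / u) (𝓝[>] 0) (𝓝 c) → 0 ≤ c) ∧
      (∃ c : ℝ, 0 ≤ c ∧ Tendsto (fun u => (h (α + u) - h α) / u) (𝓝[>] 0) (𝓝 c) ∧ 0 ≤ β) := by
  rw [hα] at hderiv ⊢
  have hslope_nonneg : ∀ c : ℝ, Tendsto (fun u => (h (α + u) - 1) / u) (𝓝[>] 0) (𝓝 c) →
      0 ≤ c := fun c hc => ge_of_tendsto hc <| by
    filter_upwards [self_mem_nhdsWithin] with u hu
    exact div_nonneg (sub_nonneg.mpr (hge u hu)) (le_of_lt hu)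
  have hzero := beta_nonneg_of_tendsto_div_zero hβ hRV
  obtain ⟨c, hc⟩ := hderiv
  refine ⟨hzero, fun c hc => beta_eq_zero_of_tendsto_div hRV hc.ne', hslope_nonneg, c,
    hslope_nonneg c hc, hc, ?_⟩
  rcases (hslope_nonneg c hc).lt_or_eq with hlt | rfl
  · exact (beta_eq_zero_of_tendsto_div hRV hlt.ne' hc).ge
  · exact hzero hc

theorem tendsto_slope_right_of_eventuallyEq {f F : ℝ → ℝ} {x c : ℝ} (hF : HasDerivAt F c x)
    (hfF : f =ᶠ[𝓝[≥] x] F) : Tendsto (fun u => (f (x + u) - f x) / u) (𝓝[>] 0) (𝓝 c) := by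
  have hshift : Tendsto (fun u => x + u) (𝓝[>] 0) (𝓝[≥] x) := by
    have := (Filter.map_add_left_nhdsGT (c := x) (a := (0 : ℝ))).le
    rw [add_zero] at this
    exact this.trans (nhdsWithin_mono x Ioi_subset_Ici_self)
  have hfx : f x = F x := hfF.self_of_nhdsWithin self_mem_Ici
  refine hF.tendsto_slope_zero_right.congr' ?_
  filter_upwards [hshift.eventually hfF] with u hu
  rw [smul_eq_mul, inv_mul_eq_div, hu, hfx]

theorem exists_rightDeriv_of_piece {g G : ℝ × ℝ → ℝ} {γ : ℝ → ℝ × ℝ} {γ' : ℝ × ℝ} {x : ℝ}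
    {S : Set (ℝ × ℝ)} (hG : DifferentiableAt ℝ G (γ x)) (hγ : HasDerivAt γ γ' x)
    (hgG : ∀ᶠ p in 𝓝 (γ x), p ∈ S → g p = G p) (hS : ∀ v, x ≤ v → γ v ∈ S) :
    ∃ c, Tendsto (fun u => (g (γ (x + u)) - g (γ x)) / u) (𝓝[>] 0) (𝓝 c) := by
  refine ⟨_, tendsto_slope_right_of_eventuallyEq (f := g ∘ γ)
    (hG.hasFDerivAt.comp_hasDerivAt x hγ) ?_⟩
  filter_upwards [nhdsWithin_le_nhds (hγ.continuousAt.eventually hgG), self_mem_nhdsWithin]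
    with v hv hxv using hv (hS v hxv)

theorem condExtremes_beta_sign_general
    (g : ℝ × ℝ → ℝ)
    (hg_ge_max : ∀ p : ℝ × ℝ, 0 ≤ p.1 → 0 ≤ p.2 → max p.1 p.2 ≤ g p)
    -- the point (1, α₁) on the unit level set; g piecewise-C¹ near (1, α₁)
    (α₁ : ℝ) (hα₁0 : 0 ≤ α₁) (hα₁ : g (1, α₁) = 1)
    (hpiece₁ : ∃ gl gu : ℝ × ℝ → ℝ,
      (∀ t : ℝ, 0 < t → ∀ p : ℝ × ℝ, gl (t • p) = t * gl p) ∧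
      (∀ t : ℝ, 0 < t → ∀ p : ℝ × ℝ, gu (t • p) = t * gu p) ∧
      ContDiffAt ℝ 1 gl (1, α₁) ∧ ContDiffAt ℝ 1 gu (1, α₁) ∧
      (∀ᶠ p : ℝ × ℝ in 𝓝 (1, α₁),
        (p.2 ≤ α₁ * p.1 → g p = gl p) ∧ (α₁ * p.1 ≤ p.2 → g p = gu p)))
    (β₁ : ℝ) (hβ₁ : β₁ ≤ 1)
    (hRV₁ : RegVaryingAtZero (fun u => g (1, α₁ + u) - 1) (1 / (1 - β₁)))
    -- the point (α₂, 1) on the unit level set; g piecewise-C¹ near (α₂, 1)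
    (α₂ : ℝ) (hα₂0 : 0 ≤ α₂) (hα₂ : g (α₂, 1) = 1)
    (hpiece₂ : ∃ gl gu : ℝ × ℝ → ℝ,
      (∀ t : ℝ, 0 < t → ∀ p : ℝ × ℝ, gl (t • p) = t * gl p) ∧
      (∀ t : ℝ, 0 < t → ∀ p : ℝ × ℝ, gu (t • p) = t * gu p) ∧
      ContDiffAt ℝ 1 gl (α₂, 1) ∧ ContDiffAt ℝ 1 gu (α₂, 1) ∧
      (∀ᶠ p : ℝ × ℝ in 𝓝 (α₂, 1),
        (p.1 ≤ α₂ * p.2 → g p = gl p) ∧ (α₂ * p.2 ≤ p.1 → g p = gu p)))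
    (β₂ : ℝ) (hβ₂ : β₂ ≤ 1)
    (hRV₂ : RegVaryingAtZero (fun u => g (α₂ + u, 1) - 1) (1 / (1 - β₂))) :
    (((Tendsto (fun u => (g (1, α₁ + u) - g (1, α₁)) / u) (𝓝[>] 0) (𝓝 0) → 0 ≤ β₁) ∧
      (∀ c : ℝ, 0 < c →
        Tendsto (fun u => (g (1, α₁ + u) - g (1, α₁)) / u) (𝓝[>] 0) (𝓝 c) → β₁ = 0) ∧
      (∀ c : ℝ,
        Tendsto (fun u => (g (1, α₁ + u) - g (1, α₁)) / u) (𝓝[>] 0) (𝓝 c) → 0 ≤ c) ∧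
      (0 < α₁ → ∃ c : ℝ, 0 ≤ c ∧
        Tendsto (fun u => (g (1, α₁ + u) - g (1, α₁)) / u) (𝓝[>] 0) (𝓝 c) ∧ 0 ≤ β₁))) ∧
    (((Tendsto (fun u => (g (α₂ + u, 1) - g (α₂, 1)) / u) (𝓝[>] 0) (𝓝 0) → 0 ≤ β₂) ∧
      (∀ c : ℝ, 0 < c →
        Tendsto (fun u => (g (α₂ + u, 1) - g (α₂, 1)) / u) (𝓝[>] 0) (𝓝 c) → β₂ = 0) ∧
      (∀ c : ℝ,
        Tendsto (fun u => (g (α₂ + u, 1) - g (α₂, 1)) / u) (𝓝[>] 0) (𝓝 c) → 0 ≤ c) ∧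
      (0 < α₂ → ∃ c : ℝ, 0 ≤ c ∧
        Tendsto (fun u => (g (α₂ + u, 1) - g (α₂, 1)) / u) (𝓝[>] 0) (𝓝 c) ∧ 0 ≤ β₂))) := by
  obtain ⟨_, gu₁, -, -, -, hgu₁, hsplit₁⟩ := hpiece₁
  obtain ⟨_, gu₂, -, -, -, hgu₂, hsplit₂⟩ := hpiece₂
  have hderiv₁ := exists_rightDeriv_of_piece (γ := fun v => (1, v)) (S := {p | α₁ * p.1 ≤ p.2})
    (hgu₁.differentiableAt one_ne_zero) ((hasDerivAt_const α₁ 1).prodMk (hasDerivAt_id' α₁))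
    (hsplit₁.mono fun _ hp => hp.2) fun v hv => by simpa using hv
  have hderiv₂ := exists_rightDeriv_of_piece (γ := fun v => (v, 1)) (S := {p | α₂ * p.2 ≤ p.1})
    (hgu₂.differentiableAt one_ne_zero) ((hasDerivAt_id' α₂).prodMk (hasDerivAt_const α₂ 1))
    (hsplit₂.mono fun _ hp => hp.2) fun v hv => by simpa using hv
  obtain ⟨h₁, h₂, h₃, h₄⟩ := beta_sign_of_exists_rightDeriv (h := fun v => g (1, v)) hα₁
    (fun u hu => (le_max_left _ _).trans (hg_ge_max (1, α₁ + u) zero_le_one (by positivity)))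
    hβ₁ hRV₁ hderiv₁
  obtain ⟨h₁', h₂', h₃', h₄'⟩ := beta_sign_of_exists_rightDeriv (h := fun v => g (v, 1)) hα₂
    (fun u hu => (le_max_right _ _).trans (hg_ge_max (α₂ + u, 1) (by positivity) zero_le_one))
    hβ₂ hRV₂ hderiv₂
  exact ⟨⟨h₁, h₂, h₃, fun _ => h₄⟩, ⟨h₁', h₂', h₃', fun _ => h₄'⟩⟩

/-- Proposition 6 of the paper: for a limit set whose gauge function `g` is
piecewise continuously differentiable (near the points of interest it agrees with two
`1`-homogeneous `C¹` pieces on either side of the relevant ray), with `g(1,α₁) = 1` and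
`u ↦ g(1, α₁+u) - 1 ∈ RV⁰_{1/(1-β₁)}`: the one-sided derivative
`g₂(1,(α₁)₊) = lim_{u→0⁺}(g(1,α₁+u) - g(1,α₁))/u` is nonnegative whenever it exists,
(i) if it is `0` then `β₁ ≥ 0`; (ii) if it is finite and positive then `β₁ = 0`; and
if `α₁ > 0` then it exists, is finite and nonnegative, so that `β₁ ≥ 0`.
The analogous statements hold for `α₂, β₂`. -/
theorem condExtremes_beta_sign
    (g : ℝ × ℝ → ℝ) (hg_cont : Continuous g)
    (hg_homog : ∀ t : ℝ, 0 < t → ∀ p : ℝ × ℝ, g (t • p) = t * g p)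
    (hg_ge_max : ∀ p : ℝ × ℝ, 0 ≤ p.1 → 0 ≤ p.2 → max p.1 p.2 ≤ g p)
    -- the point (1, α₁) on the unit level set; g piecewise-C¹ near (1, α₁)
    (α₁ : ℝ) (hα₁0 : 0 ≤ α₁) (hα₁ : g (1, α₁) = 1)
    (hpiece₁ : ∃ gl gu : ℝ × ℝ → ℝ,
      (∀ t : ℝ, 0 < t → ∀ p : ℝ × ℝ, gl (t • p) = t * gl p) ∧
      (∀ t : ℝ, 0 < t → ∀ p : ℝ × ℝ, gu (t • p) = t * gu p) ∧
      ContDiffAt ℝ 1 gl (1, α₁) ∧ ContDiffAt ℝ 1 gu (1, α₁) ∧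
      (∀ᶠ p : ℝ × ℝ in 𝓝 (1, α₁),
        (p.2 ≤ α₁ * p.1 → g p = gl p) ∧ (α₁ * p.1 ≤ p.2 → g p = gu p)))
    (β₁ : ℝ) (hβ₁ : β₁ ≤ 1)
    (hRV₁ : RegVaryingAtZero (fun u => g (1, α₁ + u) - 1) (1 / (1 - β₁)))
    -- the point (α₂, 1) on the unit level set; g piecewise-C¹ near (α₂, 1)
    (α₂ : ℝ) (hα₂0 : 0 ≤ α₂) (hα₂ : g (α₂, 1) = 1)
    (hpiece₂ : ∃ gl gu : ℝ × ℝ → ℝ,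
      (∀ t : ℝ, 0 < t → ∀ p : ℝ × ℝ, gl (t • p) = t * gl p) ∧
      (∀ t : ℝ, 0 < t → ∀ p : ℝ × ℝ, gu (t • p) = t * gu p) ∧
      ContDiffAt ℝ 1 gl (α₂, 1) ∧ ContDiffAt ℝ 1 gu (α₂, 1) ∧
      (∀ᶠ p : ℝ × ℝ in 𝓝 (α₂, 1),
        (p.1 ≤ α₂ * p.2 → g p = gl p) ∧ (α₂ * p.2 ≤ p.1 → g p = gu p)))
    (β₂ : ℝ) (hβ₂ : β₂ ≤ 1)
    (hRV₂ : RegVaryingAtZero (fun u => g (α₂ + u, 1) - 1) (1 / (1 - β₂))) :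
    (((Tendsto (fun u => (g (1, α₁ + u) - g (1, α₁)) / u) (𝓝[>] 0) (𝓝 0) → 0 ≤ β₁) ∧
      (∀ c : ℝ, 0 < c →
        Tendsto (fun u => (g (1, α₁ + u) - g (1, α₁)) / u) (𝓝[>] 0) (𝓝 c) → β₁ = 0) ∧
      (∀ c : ℝ,
        Tendsto (fun u => (g (1, α₁ + u) - g (1, α₁)) / u) (𝓝[>] 0) (𝓝 c) → 0 ≤ c) ∧
      (0 < α₁ → ∃ c : ℝ, 0 ≤ c ∧
        Tendsto (fun u => (g (1, α₁ + u) - g (1, α₁)) / u) (𝓝[>] 0) (𝓝 c) ∧ 0 ≤ β₁))) ∧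
    (((Tendsto (fun u => (g (α₂ + u, 1) - g (α₂, 1)) / u) (𝓝[>] 0) (𝓝 0) → 0 ≤ β₂) ∧
      (∀ c : ℝ, 0 < c →
        Tendsto (fun u => (g (α₂ + u, 1) - g (α₂, 1)) / u) (𝓝[>] 0) (𝓝 c) → β₂ = 0) ∧
      (∀ c : ℝ,
        Tendsto (fun u => (g (α₂ + u, 1) - g (α₂, 1)) / u) (𝓝[>] 0) (𝓝 c) → 0 ≤ c) ∧
      (0 < α₂ → ∃ c : ℝ, 0 ≤ c ∧
        Tendsto (fun u => (g (α₂ + u, 1) - g (α₂, 1)) / u) (𝓝[>] 0) (𝓝 c) ∧ 0 ≤ β₂))) :=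
  condExtremes_beta_sign_general g hg_ge_max α₁ hα₁0 hα₁ hpiece₁ β₁ hβ₁ hRV₁ α₂ hα₂0 hα₂ hpiece₂ β₂
    hβ₂ hRV₂
end

section
/- Let g : [0,∞)^d → [0,∞) be continuous and positively 1-homogeneous. For ω in the simplex S_Σ, let R_ω = ∏_{j=1}^d (ω_j/max(ω), ∞) and B_ω = ∪_{i=1}^d {x ∈ ℝ_+^d : x_i = ω_i/max(ω), x_j ≥ ω_j/max(ω) for all j ≠ i}. Then min_{y ∈ B_ω} g(y) = inf_{y ∈ R_ω} g(y). -/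
open Filter Topology

/-- Remark after Proposition 8 of the paper: for a continuous, positively
`1`-homogeneous gauge function `g` (bounding the coordinates on the positive orthant) and
`ω` in the unit simplex, the minimum of `g` over the boundary `B_ω` of
`R_ω = ∏_j (ω_j/max(ω), ∞)` equals the infimum of `g` over `R_ω`. -/
theorem min_on_boundary_eq_inf_on_region
    {d : ℕ} (hd : 0 < d)
    (g : (Fin d → ℝ) → ℝ) (hgcont : Continuous g)
    (hghomog : ∀ t : ℝ, 0 < t → ∀ x, g (t • x) = t * g x)
    (hgmax : ∀ x : Fin d → ℝ, (∀ j, 0 ≤ x j) → ∀ j, x j ≤ g x)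
    (ω : Fin d → ℝ) (hω0 : ∀ j, 0 ≤ ω j) (hω1 : ∑ j, ω j = 1) :
    sInf (g '' (⋃ i : Fin d, {x : Fin d → ℝ | (∀ j, 0 ≤ x j) ∧
        x i = ω i / (⨆ l, ω l) ∧ ∀ j, j ≠ i → ω j / (⨆ l, ω l) ≤ x j})) =
      sInf (g '' {x : Fin d → ℝ | ∀ j, ω j / (⨆ l, ω l) < x j}) := by
  have : Nonempty (Fin d) := ⟨⟨0, hd⟩⟩
  set m := ⨆ l, ω l with hm
  obtain ⟨i₀, hi₀⟩ : ∃ i₀, ∀ l, ω l ≤ ω i₀ := Finite.exists_max ω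
  have hmeq : m = ω i₀ :=
    le_antisymm (ciSup_le hi₀) (le_ciSup (Set.Finite.bddAbove (Set.finite_range ω)) i₀)
  obtain ⟨j₀, hj₀⟩ : ∃ j, 0 < ω j := by
    by_contra h
    push_neg at h
    have : ∑ j, ω j ≤ 0 := Finset.sum_nonpos (fun j _ => h j)
    linarith
  have hmpos : 0 < m := lt_of_lt_of_le hj₀ (hmeq ▸ hi₀ j₀)
  have hc0 : ∀ j, 0 ≤ ω j / m := fun j => div_nonneg (hω0 j) hmpos.le
  have hci₀ : ω i₀ / m = 1 := by rw [hmeq, div_self]; rw [← hmeq]; exact hmpos.ne'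
  set B := ⋃ i : Fin d, {x : Fin d → ℝ | (∀ j, 0 ≤ x j) ∧
      x i = ω i / m ∧ ∀ j, j ≠ i → ω j / m ≤ x j} with hB
  set R := {x : Fin d → ℝ | ∀ j, ω j / m < x j} with hR
  -- membership helpers
  have hBne : B.Nonempty := by
    refine ⟨fun j => ω j / m, Set.mem_iUnion.2 ⟨i₀, ?_⟩⟩
    exact ⟨hc0, rfl, fun j _ => le_refl _⟩
  have hRne : R.Nonempty := ⟨fun j => ω j / m + 1, fun j => by linarith [hc0 j]⟩
  have hBbdd : BddBelow (g '' B) := by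
    refine ⟨0, ?_⟩
    rintro y ⟨x, hx, rfl⟩
    obtain ⟨i, hi⟩ := Set.mem_iUnion.1 hx
    exact le_trans (hi.1 i₀) (hgmax x hi.1 i₀)
  have hRbdd : BddBelow (g '' R) := by
    refine ⟨0, ?_⟩
    rintro y ⟨x, hx, rfl⟩
    have hxpos : ∀ j, 0 ≤ x j := fun j => le_of_lt (lt_of_le_of_lt (hc0 j) (hx j))
    exact le_trans (hxpos i₀) (hgmax x hxpos i₀)
  apply le_antisymm
  · -- sInf (g '' B) ≤ sInf (g '' R): for x ∈ R, scale down to boundary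
    refine le_csInf (hRne.image g) ?_
    rintro y ⟨x, hx, rfl⟩
    have hxpos : ∀ j, 0 < x j := fun j => lt_of_le_of_lt (hc0 j) (hx j)
    obtain ⟨i, hi⟩ : ∃ i, ∀ j, ω j / m / x j ≤ ω i / m / x i :=
      Finite.exists_max (fun j => ω j / m / x j)
    set t := ω i / m / x i with ht
    have htpos : 0 < t := by
      have h1 : (0:ℝ) < ω i₀ / m / x i₀ := by
        rw [hci₀]; exact div_pos one_pos (hxpos i₀)
      exact lt_of_lt_of_le h1 (hi i₀)
    have ht1 : t < 1 := by
      rw [ht, div_lt_one (hxpos i)]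
      exact hx i
    have htx : ∀ j, ω j / m ≤ t * x j := by
      intro j
      have := hi j
      rw [div_le_div_iff₀ (hxpos j) (hxpos i)] at this
      calc ω j / m = ω j / m / x j * x j := (div_mul_cancel₀ _ (hxpos j).ne').symm
        _ ≤ t * x j := by
            apply mul_le_mul_of_nonneg_right _ (hxpos j).le
            rw [div_le_div_iff₀ (hxpos j) (hxpos i)]; exact this
    have hmem : t • x ∈ B := by
      refine Set.mem_iUnion.2 ⟨i, ⟨?_, ?_, ?_⟩⟩
      · intro j; exact mul_nonneg htpos.le (hxpos j).le
      · show t * x i = ω i / m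
        rw [ht]; exact div_mul_cancel₀ _ (hxpos i).ne'
      · intro j _; exact htx j
    have hgx : 0 ≤ g x := le_trans (hxpos i₀).le (hgmax x (fun j => (hxpos j).le) i₀)
    calc sInf (g '' B) ≤ g (t • x) := csInf_le hBbdd ⟨t • x, hmem, rfl⟩
      _ = t * g x := hghomog t htpos x
      _ ≤ 1 * g x := mul_le_mul_of_nonneg_right ht1.le hgx
      _ = g x := one_mul _
  · -- sInf (g '' R) ≤ sInf (g '' B): boundary points are limits from R
    refine le_csInf (hBne.image g) ?_
    rintro y ⟨x, hx, rfl⟩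
    obtain ⟨i, hxi⟩ := Set.mem_iUnion.1 hx
    have hxge : ∀ j, ω j / m ≤ x j := by
      intro j
      by_cases h : j = i
      · subst h; exact le_of_eq hxi.2.1.symm
      · exact hxi.2.2 j h
    have htend : Tendsto (fun ε : ℝ => g (x + ε • (1 : Fin d → ℝ))) (𝓝[>] 0) (𝓝 (g x)) := by
      have hcont : Continuous (fun ε : ℝ => g (x + ε • (1 : Fin d → ℝ))) := by
        apply hgcont.comp
        continuity
      have := hcont.tendsto 0
      simpa using this.mono_left nhdsWithin_le_nhds
    refine ge_of_tendsto htend ?_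
    filter_upwards [self_mem_nhdsWithin] with ε (hε : 0 < ε)
    refine csInf_le hRbdd ⟨x + ε • (1 : Fin d → ℝ), fun j => ?_, rfl⟩
    have : (x + ε • (1 : Fin d → ℝ)) j = x j + ε := by simp
    rw [this]
    linarith [hxge j]
end

section
/- Assume d = 2, the sample clouds from (X_{E,1}, X_{E,2}) with standard exponential margins converge in probability (with scaling log n) onto a limit set G with gauge function g, and the coefficients τ_1(δ), τ_2(δ) are well defined for δ ∈ [0,1]. Then τ_1(δ) = [min_{γ ∈ [0,δ]} g(1, γ)]^{−1} and τ_2(δ) = [min_{γ ∈ [0,δ]} g(γ, 1)]^{−1}. -/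
open MeasureTheory Filter Topology ProbabilityTheory Pointwise

/-- The `n`-point sample cloud `{X 1 / r n, …, X n / r n}` of the scaled observations. -/
def sampleCloud2 {Ω : Type*} (X : ℕ → Ω → ℝ × ℝ) (r : ℕ → ℝ)
    (n : ℕ) (ω : Ω) : Set (ℝ × ℝ) :=
  {y | ∃ i, 1 ≤ i ∧ i ≤ n ∧ y = (r n)⁻¹ • X i ω}

/-- Convergence in probability of random sets onto a deterministic set `G`, in the sense that
the Hausdorff distance to `G` tends to `0` in probability. -/
def ConvInProbOnto2 {Ω : Type*} [MeasurableSpace Ω] (μ : Measure Ω)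
    (N : ℕ → Ω → Set (ℝ × ℝ)) (G : Set (ℝ × ℝ)) : Prop :=
  ∀ ε : ℝ, 0 < ε →
    Tendsto (fun n => μ {ω | ε < Metric.hausdorffDist (N n ω) G}) atTop (𝓝 0)

open Set

/-!
Write `F(t) = P(X₁ > log t, X₂ ≤ δ log t)`, the tail in the definition of `τ₁(δ)`. Regular
variation with index `-1/τ₁` gives `log F(eᵏ) / k → -1/τ₁`, by a Cesàro argument on the
increments `log (F(eᵏ⁺¹) / F(eᵏ))`.

The convergence of the clouds is a large deviation principle at speed `log n`: independence turns
"all `n` points lie in `U`" into a probability `P(X / log n ∈ U)ⁿ`, so for an open `U ⊇ G` we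
eventually get `P(X / log n ∉ U) < 1/n`, and for a neighbourhood `V` of a point of `G` we
eventually get `P(X / log n ∈ V) > 1/(2n)`.

Homogeneity gives `g(x) ≥ c x₁` on the cone `0 ≤ x₂ ≤ δ x₁`, where `c = min_{[0,δ]} g(1, ·)`.
Taking `U = {g < θ}` with `θ > 1` and `n ≈ e^{kc/θ}` yields `F(eᵏ) ≤ 2 e^{-kc/θ}`. Taking `V`
around `p / g(p)`, for `p` in the open quadrant `{p₁ > 1, 0 < p₂ < δ}`, and `n ≈ e^{k g(p)}`
yields `F(eᵏ) ≥ e^{-k g(p)} / 4`. Letting `θ → 1` and `p → (1, γ*)`, with `γ*` a minimiser,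
gives `1/τ₁ = c`. For `δ = 0` the tail vanishes identically since `X₂ > 0` almost surely, which
regular variation excludes. The statement for `τ₂` is the one for `τ₁` applied to the swapped
vector.
-/

lemma tendsto_div_natCast_of_tendsto_sub {u : ℕ → ℝ} {L : ℝ}
    (h : Tendsto (fun n => u (n + 1) - u n) atTop (𝓝 L)) :
    Tendsto (fun n : ℕ => u n / n) atTop (𝓝 L) := by
  have hmean := h.cesaro
  simp only [Finset.sum_range_sub] at hmean
  have hinit : Tendsto (fun n : ℕ => (n : ℝ)⁻¹ * u 0) atTop (𝓝 0) := by
    simpa using (tendsto_inv_atTop_zero.comp tendsto_natCast_atTop_atTop).mul_const (u 0)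
  simpa [div_eq_inv_mul, ← mul_add] using hmean.add hinit

lemma eventually_one_sub_lt_inv_of_tendsto_pow_one {p : ℕ → ℝ} (hp : ∀ n, 0 ≤ p n)
    (h : Tendsto (fun n => p n ^ n) atTop (𝓝 1)) :
    ∀ᶠ n : ℕ in atTop, 1 - p n < (n : ℝ)⁻¹ := by
  filter_upwards [h.eventually (lt_mem_nhds (Real.exp_lt_one_iff.2 neg_one_lt_zero)),
    eventually_gt_atTop 0] with n hn hn0
  by_contra! hle
  have hmul : 1 ≤ n * (1 - p n) := by
    rw [inv_le_iff_one_le_mul₀ (Nat.cast_pos.2 hn0)] at hle; linarith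
  have : p n ^ n ≤ Real.exp (-1) := calc
    p n ^ n = (1 - (1 - p n)) ^ n := by ring
    _ ≤ Real.exp (-(1 - p n)) ^ n :=
      pow_le_pow_left₀ (by linarith [hp n]) (Real.one_sub_le_exp_neg _) n
    _ = Real.exp (-(n * (1 - p n))) := by rw [← Real.exp_nat_mul]; ring_nf
    _ ≤ Real.exp (-1) := Real.exp_le_exp.2 (by linarith)
  linarith

lemma eventually_inv_lt_of_tendsto_one_sub_pow_zero {p : ℕ → ℝ} (hp : ∀ n, p n ≤ 2)
    (h : Tendsto (fun n => (1 - p n) ^ n) atTop (𝓝 0)) :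
    ∀ᶠ n : ℕ in atTop, (2 * n : ℝ)⁻¹ < p n := by
  filter_upwards [h.eventually (gt_mem_nhds (by norm_num : (0 : ℝ) < 1 / 2))] with n hn
  have hbernoulli : 1 + n * (-p n) ≤ (1 - p n) ^ n := by
    simpa [sub_eq_add_neg] using one_add_mul_le_pow (a := -p n) (by linarith [hp n]) n
  have hnp : 1 < 2 * n * p n := by linarith
  have hn0 : n ≠ 0 := by
    rintro rfl
    norm_num at hnp
  have hn : (0 : ℝ) < 2 * n := by positivity
  rw [inv_lt_iff_one_lt_mul₀' hn]
  linarith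

namespace RegVaryingAtTop

variable {f : ℝ → ℝ} {ρ : ℝ}

lemma eventually_ne_zero (hf : RegVaryingAtTop f ρ) : ∀ᶠ t in atTop, f t ≠ 0 := by
  have hone := hf 1 one_pos
  simp only [mul_one, Real.one_rpow] at hone
  filter_upwards [hone.eventually (eventually_ne_nhds one_ne_zero)] with t ht hzero
  simp [hzero] at ht

lemma tendsto_log_comp_exp_div (hf : RegVaryingAtTop f ρ) :
    Tendsto (fun k : ℕ => Real.log (f (Real.exp k)) / k) atTop (𝓝 ρ) := by
  apply tendsto_div_natCast_of_tendsto_sub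
  have hexp : Tendsto (fun k : ℕ => Real.exp k) atTop atTop :=
    Real.tendsto_exp_atTop.comp tendsto_natCast_atTop_atTop
  have hratio := hf _ (Real.exp_pos 1) |>.comp hexp
  rw [Real.exp_one_rpow] at hratio
  have hlog := ((Real.continuousAt_log (Real.exp_pos ρ).ne').tendsto.comp hratio)
  rw [Real.log_exp] at hlog
  refine hlog.congr' ?_
  have hne := hexp.eventually hf.eventually_ne_zero
  filter_upwards [hne, (tendsto_add_atTop_nat 1).eventually hne] with k hk hk1
  simp only [Function.comp_apply, Nat.cast_add, Nat.cast_one, Real.exp_add] at hk1 ⊢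
  rw [Real.log_div hk1 hk]

end RegVaryingAtTop

lemma sampleCloud2_nonempty {Ω : Type*} (X : ℕ → Ω → ℝ × ℝ) (r : ℕ → ℝ) {n : ℕ} (hn : 1 ≤ n)
    (ω : Ω) :
    (sampleCloud2 X r n ω).Nonempty :=
  ⟨_, 1, le_rfl, hn, rfl⟩

lemma hausdorffEDist_sampleCloud2_ne_top {Ω : Type*} (X : ℕ → Ω → ℝ × ℝ) (r : ℕ → ℝ) {n : ℕ}
    (hn : 1 ≤ n) (ω : Ω) {G : Set (ℝ × ℝ)} (hGne : G.Nonempty) (hGbd : Bornology.IsBounded G) :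
    Metric.hausdorffEDist (sampleCloud2 X r n ω) G ≠ ⊤ := by
  refine Metric.hausdorffEDist_ne_top_of_nonempty_of_bounded (sampleCloud2_nonempty X r hn ω)
    hGne (Set.Finite.isBounded ?_) hGbd
  refine ((Set.finite_Icc 1 n).image fun i => (r n)⁻¹ • X i ω).subset ?_
  rintro _ ⟨i, hi1, hi2, rfl⟩
  exact ⟨i, ⟨hi1, hi2⟩, rfl⟩

section SampleCloud

variable {Ω : Type*} [MeasurableSpace Ω] {μ : Measure Ω}

lemma tendsto_measureReal_zero_of_eventually_subset {ι : Type*} {l : Filter ι} [IsFiniteMeasure μ]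
    {B C : ι → Set Ω} (hBC : ∀ᶠ n in l, B n ⊆ C n) (hC : Tendsto (fun n => μ (C n)) l (𝓝 0)) :
    Tendsto (fun n => μ.real (B n)) l (𝓝 0) := by
  have hCreal : Tendsto (fun n => μ.real (C n)) l (𝓝 0) := by
    simpa [measureReal_def, Function.comp_def] using
      (ENNReal.tendsto_toReal ENNReal.zero_ne_top).comp hC
  exact squeeze_zero' (.of_forall fun n => measureReal_nonneg)
    (hBC.mono fun n h => measureReal_mono h) hCreal

lemma measureReal_iInter_preimage_eq_pow {E : Type*} [MeasurableSpace E] {X : ℕ → Ω → E}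
    (hindep : iIndepFun X μ) (hident : ∀ i, IdentDistrib (X i) (X 0) μ μ)
    {A : Set E} (hA : MeasurableSet A) (n : ℕ) :
    μ.real (⋂ i ∈ Finset.Icc 1 n, X i ⁻¹' A) = μ.real (X 0 ⁻¹' A) ^ n := by
  rw [measureReal_def, hindep.meas_biInter fun i _ => ⟨A, hA, rfl⟩,
    Finset.prod_congr rfl fun i _ => (hident i).measure_mem_eq hA,
    Finset.prod_const, Nat.card_Icc, Nat.add_sub_cancel, ENNReal.toReal_pow, measureReal_def]

variable [IsProbabilityMeasure μ] {X : ℕ → Ω → ℝ × ℝ} {G : Set (ℝ × ℝ)}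

lemma eventually_measureReal_smul_notMem_lt_inv (hXmeas : ∀ i, Measurable (X i))
    (hindep : iIndepFun X μ) (hident : ∀ i, IdentDistrib (X i) (X 0) μ μ)
    (hG : IsCompact G) (hGne : G.Nonempty)
    (hconv : ConvInProbOnto2 μ (sampleCloud2 X fun n => Real.log n) G)
    {U : Set (ℝ × ℝ)} (hU : IsOpen U) (hGU : G ⊆ U) :
    ∀ᶠ n : ℕ in atTop, μ.real {ω | (Real.log n)⁻¹ • X 0 ω ∉ U} < (n : ℝ)⁻¹ := by
  obtain ⟨ε, hε, hεU⟩ := hG.exists_thickening_subset_open hU hGU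
  set A : ℕ → Set (ℝ × ℝ) := fun n => (fun w => (Real.log n)⁻¹ • w) ⁻¹' U
  have hA : ∀ n, MeasurableSet (A n) := fun n =>
    (hU.preimage (continuous_const_smul _)).measurableSet
  have hescape : ∀ᶠ n in atTop, (⋂ i ∈ Finset.Icc 1 n, X i ⁻¹' A n)ᶜ ⊆
      {ω | ε / 2 < Metric.hausdorffDist (sampleCloud2 X (fun n => Real.log n) n ω) G} := by
    filter_upwards [eventually_ge_atTop 1] with n hn ω hω
    simp only [mem_compl_iff, mem_iInter, not_forall] at hω
    obtain ⟨i, hi, hiU⟩ := hω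
    rw [Finset.mem_Icc] at hi
    have hfar : ε ≤ Metric.infDist ((Real.log n)⁻¹ • X i ω) G := not_lt.1 fun h =>
      hiU (hεU ((Metric.mem_thickening_iff_infDist_lt hGne).2 h))
    exact (half_lt_self hε).trans_le <| hfar.trans <| Metric.infDist_le_hausdorffDist_of_mem
      ⟨i, hi.1, hi.2, rfl⟩ (hausdorffEDist_sampleCloud2_ne_top X _ hn ω hGne hG.isBounded)
  have hall : Tendsto (fun n => μ.real (X 0 ⁻¹' A n) ^ n) atTop (𝓝 1) := by
    have hout := tendsto_measureReal_zero_of_eventually_subset hescape (hconv _ (half_pos hε))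
    refine (by simpa using tendsto_const_nhds.sub hout :
      Tendsto (fun n => 1 - μ.real (⋂ i ∈ Finset.Icc 1 n, X i ⁻¹' A n)ᶜ) atTop (𝓝 1)).congr
        fun n => ?_
    rw [probReal_compl_eq_one_sub (Finset.measurableSet_biInter _ fun i _ => hXmeas i (hA n)),
      sub_sub_cancel, measureReal_iInter_preimage_eq_pow hindep hident (hA n)]
  filter_upwards [eventually_one_sub_lt_inv_of_tendsto_pow_one (fun n => measureReal_nonneg) hall]
    with n hn
  rwa [← probReal_compl_eq_one_sub (hXmeas 0 (hA n))] at hn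

lemma eventually_inv_lt_measureReal_smul_mem (hXmeas : ∀ i, Measurable (X i))
    (hindep : iIndepFun X μ) (hident : ∀ i, IdentDistrib (X i) (X 0) μ μ)
    (hGbd : Bornology.IsBounded G)
    (hconv : ConvInProbOnto2 μ (sampleCloud2 X fun n => Real.log n) G)
    {q : ℝ × ℝ} (hq : q ∈ G) {V : Set (ℝ × ℝ)} (hV : V ∈ 𝓝 q) :
    ∀ᶠ n : ℕ in atTop, (2 * n : ℝ)⁻¹ < μ.real {ω | (Real.log n)⁻¹ • X 0 ω ∈ V} := by
  obtain ⟨ε, hε, hεV⟩ := Metric.mem_nhds_iff.1 hV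
  set A : ℕ → Set (ℝ × ℝ) := fun n => (fun w => (Real.log n)⁻¹ • w) ⁻¹' Metric.ball q ε
  have hA : ∀ n, MeasurableSet (A n) := fun n =>
    (Metric.isOpen_ball.preimage (continuous_const_smul _)).measurableSet
  have hmiss : ∀ᶠ n in atTop, (⋂ i ∈ Finset.Icc 1 n, X i ⁻¹' (A n)ᶜ) ⊆
      {ω | ε / 2 < Metric.hausdorffDist (sampleCloud2 X (fun n => Real.log n) n ω) G} := by
    filter_upwards [eventually_ge_atTop 1] with n hn ω hω
    simp only [mem_iInter, mem_preimage, mem_compl_iff, A, Metric.mem_ball, not_lt] at hω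
    have hfar : ε ≤ Metric.infDist q (sampleCloud2 X (fun n => Real.log n) n ω) := by
      refine (Metric.le_infDist (sampleCloud2_nonempty X _ hn ω)).2 ?_
      rintro _ ⟨i, hi1, hi2, rfl⟩
      rw [dist_comm]
      exact hω i (Finset.mem_Icc.2 ⟨hi1, hi2⟩)
    have hnear : Metric.infDist q (sampleCloud2 X (fun n => Real.log n) n ω) ≤
        Metric.hausdorffDist G (sampleCloud2 X (fun n => Real.log n) n ω) :=
      Metric.infDist_le_hausdorffDist_of_mem hq <| by
        rw [Metric.hausdorffEDist_comm]
        exact hausdorffEDist_sampleCloud2_ne_top X _ hn ω ⟨q, hq⟩ hGbd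
    rw [Metric.hausdorffDist_comm] at hnear
    exact (half_lt_self hε).trans_le (hfar.trans hnear)
  have hnone : Tendsto (fun n => (1 - μ.real (X 0 ⁻¹' A n)) ^ n) atTop (𝓝 0) := by
    refine (tendsto_measureReal_zero_of_eventually_subset hmiss (hconv _ (half_pos hε))).congr
      fun n => ?_
    rw [measureReal_iInter_preimage_eq_pow hindep hident (hA n).compl, preimage_compl,
      probReal_compl_eq_one_sub (hXmeas 0 (hA n))]
  filter_upwards [eventually_inv_lt_of_tendsto_one_sub_pow_zero
    (fun n => measureReal_le_one.trans one_le_two) hnone] with n hn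
  exact hn.trans_le (measureReal_mono fun ω hω => hεV hω)

end SampleCloud

lemma ae_of_measureReal_eq_one {Ω : Type*} [MeasurableSpace Ω] {μ : Measure Ω}
    [IsProbabilityMeasure μ] {q : Ω → Prop} (hq : MeasurableSet {ω | q ω})
    (h : μ.real {ω | q ω} = 1) : ∀ᵐ ω ∂μ, q ω :=
  (ae_iff_measure_eq hq.nullMeasurableSet).2 <| by
    rw [measure_univ]; exact (ENNReal.toReal_eq_one_iff _).1 h

def limitSet (g : ℝ × ℝ → ℝ) : Set (ℝ × ℝ) :=
  {p | 0 ≤ p.1 ∧ 0 ≤ p.2 ∧ g p ≤ 1}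

section Gauge

variable {g : ℝ × ℝ → ℝ}

lemma homogeneous_apply_zero (hghomog : ∀ t : ℝ, 0 < t → ∀ p : ℝ × ℝ, g (t • p) = t * g p) :
    g 0 = 0 := by
  have h := hghomog 2 two_pos 0
  rw [smul_zero] at h
  linarith

lemma zero_mem_limitSet (hghomog : ∀ t : ℝ, 0 < t → ∀ p : ℝ × ℝ, g (t • p) = t * g p) :
    (0 : ℝ × ℝ) ∈ limitSet g :=
  ⟨le_rfl, le_rfl, (homogeneous_apply_zero hghomog).trans_le zero_le_one⟩

lemma isCompact_limitSet (hgcont : Continuous g)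
    (hgmax : ∀ p : ℝ × ℝ, 0 ≤ p.1 → 0 ≤ p.2 → max p.1 p.2 ≤ g p) :
    IsCompact (limitSet g) := by
  refine (isCompact_Icc.prod isCompact_Icc :
    IsCompact (Icc (0 : ℝ) 1 ×ˢ Icc (0 : ℝ) 1)).of_isClosed_subset ?_ ?_
  · exact (isClosed_le continuous_const continuous_fst).inter
      ((isClosed_le continuous_const continuous_snd).inter (isClosed_le hgcont continuous_const))
  · rintro p ⟨h1, h2, hg⟩
    have hmax := (hgmax p h1 h2).trans hg
    exact ⟨⟨h1, (le_max_left _ _).trans hmax⟩, ⟨h2, (le_max_right _ _).trans hmax⟩⟩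

lemma inv_gauge_smul_mem_limitSet (hghomog : ∀ t : ℝ, 0 < t → ∀ p : ℝ × ℝ, g (t • p) = t * g p)
    {p : ℝ × ℝ} (hp1 : 0 ≤ p.1) (hp2 : 0 ≤ p.2) (hgp : 0 < g p) :
    (g p)⁻¹ • p ∈ limitSet g := by
  refine ⟨?_, ?_, ?_⟩
  · simpa using mul_nonneg (inv_nonneg.2 hgp.le) hp1
  · simpa using mul_nonneg (inv_nonneg.2 hgp.le) hp2
  · rw [hghomog _ (inv_pos.2 hgp), inv_mul_cancel₀ hgp.ne']

lemma mul_fst_le_gauge (hghomog : ∀ t : ℝ, 0 < t → ∀ p : ℝ × ℝ, g (t • p) = t * g p)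
    {δ c : ℝ} (hcg : ∀ γ ∈ Icc 0 δ, c ≤ g (1, γ)) {x : ℝ × ℝ} (hx1 : 0 < x.1) (hx2 : 0 ≤ x.2)
    (hx2δ : x.2 ≤ δ * x.1) : c * x.1 ≤ g x := by
  have hray : x.1 • ((1 : ℝ), x.2 / x.1) = x := by
    ext <;> simp [mul_div_cancel₀ _ hx1.ne']
  have hslope : x.2 / x.1 ∈ Icc 0 δ :=
    ⟨div_nonneg hx2 hx1.le, (div_le_iff₀ hx1).2 hx2δ⟩
  calc c * x.1 ≤ g (1, x.2 / x.1) * x.1 := mul_le_mul_of_nonneg_right (hcg _ hslope) hx1.le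
    _ = g (x.1 • ((1 : ℝ), x.2 / x.1)) := by rw [hghomog _ hx1, mul_comm]
    _ = g x := by rw [hray]

end Gauge

lemma tendsto_log_mul_exp_neg_div {C : ℝ} (hC : 0 < C) (a : ℝ) :
    Tendsto (fun k : ℕ => Real.log (C * Real.exp (-(k * a))) / k) atTop (𝓝 (-a)) := by
  have hlim := (tendsto_const_div_atTop_nhds_zero_nat (Real.log C)).sub_const a
  rw [zero_sub] at hlim
  refine hlim.congr' ?_
  filter_upwards [eventually_gt_atTop 0] with k hk
  rw [Real.log_mul hC.ne' (Real.exp_pos _).ne', Real.log_exp]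
  field_simp
  ring

lemma le_of_tendsto_log_div_of_eventually_le {f h : ℕ → ℝ} {L M : ℝ}
    (hf : Tendsto (fun k : ℕ => Real.log (f k) / k) atTop (𝓝 L))
    (hh : Tendsto (fun k : ℕ => Real.log (h k) / k) atTop (𝓝 M))
    (hpos : ∀ᶠ k in atTop, 0 < f k) (hle : ∀ᶠ k in atTop, f k ≤ h k) : L ≤ M := by
  refine le_of_tendsto_of_tendsto hf hh ?_
  filter_upwards [hpos, hle] with k h0 h1
  exact div_le_div_of_nonneg_right (Real.log_le_log h0 h1) k.cast_nonneg

lemma log_natFloor_exp_le {s : ℝ} (hs : 0 ≤ s) : Real.log ⌊Real.exp s⌋₊ ≤ s := by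
  rcases (Nat.cast_nonneg ⌊Real.exp s⌋₊ : (0 : ℝ) ≤ _).eq_or_lt with h | h
  · rwa [← h, Real.log_zero]
  · exact (Real.log_le_iff_le_exp h).2 (Nat.floor_le (Real.exp_pos s).le)

lemma inv_natFloor_exp_le {s : ℝ} (hs : 0 ≤ s) : (⌊Real.exp s⌋₊ : ℝ)⁻¹ ≤ 2 * Real.exp (-s) :=
  calc (⌊Real.exp s⌋₊ : ℝ)⁻¹ ≤ (Real.exp s / 2)⁻¹ :=
        inv_anti₀ (by positivity) (Nat.div_two_lt_floor (Real.one_le_exp hs)).le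
    _ = 2 * Real.exp (-s) := by rw [inv_div, Real.exp_neg, div_eq_mul_inv]

lemma natCeil_exp_le {s : ℝ} (hs : 0 ≤ s) : (⌈Real.exp s⌉₊ : ℝ) ≤ 2 * Real.exp s :=
  Nat.ceil_le_two_mul ((by norm_num : (2 : ℝ)⁻¹ ≤ 1).trans (Real.one_le_exp hs))

lemma le_log_natCeil_exp (s : ℝ) : s ≤ Real.log ⌈Real.exp s⌉₊ :=
  (Real.le_log_iff_exp_le ((Real.exp_pos s).trans_le (Nat.le_ceil _))).2 (Nat.le_ceil _)

lemma log_natCeil_exp_le {s : ℝ} (hs : 0 ≤ s) : Real.log ⌈Real.exp s⌉₊ ≤ s + Real.log 2 :=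
  calc Real.log ⌈Real.exp s⌉₊ ≤ Real.log (2 * Real.exp s) :=
        Real.log_le_log ((Real.exp_pos s).trans_le (Nat.le_ceil _)) (natCeil_exp_le hs)
    _ = s + Real.log 2 := by rw [Real.log_mul two_ne_zero (Real.exp_pos s).ne', Real.log_exp,
        add_comm]

lemma exists_dist_lt_smul_mem {a : ℝ} {y : ℝ × ℝ} {W : Set (ℝ × ℝ)} (hW : W ∈ 𝓝 (a • y)) :
    ∃ ε > 0, ∃ V ∈ 𝓝 y, ∀ r, dist r a < ε → ∀ y' ∈ V, r • y' ∈ W := by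
  have hsmul : ∀ᶠ z in 𝓝 a ×ˢ 𝓝 y, z.1 • z.2 ∈ W := by
    rw [← nhds_prod_eq]
    exact continuous_smul.continuousAt.preimage_mem_nhds hW
  obtain ⟨P, hP, V, hV, hPV⟩ := eventually_prod_iff.1 hsmul
  obtain ⟨ε, hε, hεP⟩ := Metric.eventually_nhds_iff.1 hP
  exact ⟨ε, hε, {y' | V y'}, hV, fun r hr y' hy' => hPV (hεP hr) hy'⟩

lemma lt_fst_and_snd_le_of_inv_smul_mem {k δ : ℝ} (hk : 0 < k) {x : ℝ × ℝ}
    (h : k⁻¹ • x ∈ Ioi 1 ×ˢ Iio δ) : k < x.1 ∧ x.2 ≤ k * δ := by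
  obtain ⟨h1, h2⟩ := h
  simp only [mem_Ioi, mem_Iio, Prod.smul_fst, Prod.smul_snd, smul_eq_mul] at h1 h2
  rw [lt_inv_mul_iff₀ hk, mul_one] at h1
  rw [inv_mul_lt_iff₀ hk] at h2
  exact ⟨h1, h2.le⟩

lemma le_neg_of_forall_one_lt_le_neg_div {L c : ℝ} (h : ∀ θ > 1, L ≤ -(c / θ)) : L ≤ -c := by
  have hlim : Tendsto (fun θ : ℝ => -(c / θ)) (𝓝[>] 1) (𝓝 (-c)) := by
    have h := ((tendsto_const_nhds (x := c)).div (tendsto_id (x := 𝓝 (1 : ℝ)))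
      one_ne_zero).neg.mono_left (nhdsWithin_le_nhds (s := Ioi 1))
    rwa [div_one] at h
  exact ge_of_tendsto hlim (eventually_nhdsWithin_of_forall h)

lemma not_regVaryingAtTop_tail_zero {Ω : Type*} [MeasurableSpace Ω] {μ : Measure Ω}
    {X : ℕ → Ω → ℝ × ℝ} (hpos : ∀ᵐ ω ∂μ, 0 < (X 0 ω).2) {ρ : ℝ} :
    ¬ RegVaryingAtTop (fun t => (μ {ω | t < Real.exp (X 0 ω).1 ∧
      Real.exp (X 0 ω).2 ≤ t ^ (0 : ℝ)}).toReal) ρ := fun hρ => by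
  obtain ⟨t, ht⟩ := hρ.eventually_ne_zero.exists
  refine ht ?_
  simp only [Real.rpow_zero]
  rw [measure_eq_zero_iff_ae_notMem.2, ENNReal.toReal_zero]
  filter_upwards [hpos] with ω hω ⟨_, hle⟩
  exact (Real.one_lt_exp_iff.2 hω).not_ge hle

section Tail

variable {Ω : Type*} [MeasurableSpace Ω] {μ : Measure Ω} [IsProbabilityMeasure μ]
  {X : ℕ → Ω → ℝ × ℝ} {g : ℝ × ℝ → ℝ}

lemma eventually_measureReal_tail_le (hXmeas : ∀ i, Measurable (X i))
    (hindep : iIndepFun X μ) (hident : ∀ i, IdentDistrib (X i) (X 0) μ μ)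
    (hpos : ∀ᵐ ω ∂μ, 0 < (X 0 ω).2) (hgcont : Continuous g)
    (hghomog : ∀ t : ℝ, 0 < t → ∀ p : ℝ × ℝ, g (t • p) = t * g p)
    (hgmax : ∀ p : ℝ × ℝ, 0 ≤ p.1 → 0 ≤ p.2 → max p.1 p.2 ≤ g p)
    (hconv : ConvInProbOnto2 μ (sampleCloud2 X fun n => Real.log n) (limitSet g))
    {δ c θ : ℝ} (hδ : 0 ≤ δ) (hc : 0 < c) (hcg : ∀ γ ∈ Icc 0 δ, c ≤ g (1, γ)) (hθ : 1 < θ) :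
    ∀ᶠ k : ℕ in atTop, μ.real {ω | (k : ℝ) < (X 0 ω).1 ∧ (X 0 ω).2 ≤ k * δ} ≤
      2 * Real.exp (-(k * (c / θ))) := by
  have hcloud := eventually_measureReal_smul_notMem_lt_inv hXmeas hindep hident
    (isCompact_limitSet hgcont hgmax) ⟨0, zero_mem_limitSet hghomog⟩ hconv
    (isOpen_lt hgcont continuous_const) fun p hp => hp.2.2.trans_lt hθ
  have hs : Tendsto (fun k : ℕ => k * (c / θ)) atTop atTop :=
    tendsto_natCast_atTop_atTop.atTop_mul_const (div_pos hc (by linarith))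
  have hn : Tendsto (fun k : ℕ => ⌊Real.exp (k * (c / θ))⌋₊) atTop atTop :=
    tendsto_nat_floor_atTop.comp (Real.tendsto_exp_atTop.comp hs)
  filter_upwards [hn.eventually hcloud, hn.eventually (eventually_ge_atTop 2),
    hs.eventually_ge_atTop 0] with k hk hk2 hs0
  set s := (k : ℝ) * (c / θ)
  set n := ⌊Real.exp s⌋₊
  have hlogn : 0 < Real.log n := Real.log_pos (by exact_mod_cast hk2)
  have hsub : {ω | (k : ℝ) < (X 0 ω).1 ∧ (X 0 ω).2 ≤ k * δ} ≤ᵐ[μ]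
      {ω | (Real.log n)⁻¹ • X 0 ω ∉ {p | g p < θ}} := by
    filter_upwards [hpos] with ω hω2 ⟨hk1, hkδ⟩ hU
    have hX1 : 0 < (X 0 ω).1 := (Nat.cast_nonneg k).trans_lt hk1
    have hlow : c * k < g (X 0 ω) := calc
      c * k < c * (X 0 ω).1 := mul_lt_mul_of_pos_left hk1 hc
      _ ≤ g (X 0 ω) := mul_fst_le_gauge hghomog hcg hX1 hω2.le <| by
        rw [mul_comm δ]; exact hkδ.trans (mul_le_mul_of_nonneg_right hk1.le hδ)
    have hhigh : g (X 0 ω) < Real.log n * θ := by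
      rw [← smul_inv_smul₀ hlogn.ne' (X 0 ω), hghomog _ hlogn]
      exact mul_lt_mul_of_pos_left hU hlogn
    have hs_eq : s * θ = c * k := by simp only [s]; field_simp
    have := mul_le_mul_of_nonneg_right (log_natFloor_exp_le hs0) (by linarith : 0 ≤ θ)
    linarith
  calc μ.real {ω | (k : ℝ) < (X 0 ω).1 ∧ (X 0 ω).2 ≤ k * δ}
      ≤ μ.real {ω | (Real.log n)⁻¹ • X 0 ω ∉ {p | g p < θ}} :=
        ENNReal.toReal_mono (measure_ne_top _ _) (measure_mono_ae hsub)
    _ ≤ (n : ℝ)⁻¹ := hk.le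
    _ ≤ 2 * Real.exp (-s) := inv_natFloor_exp_le hs0

lemma eventually_exp_le_measureReal_tail (hXmeas : ∀ i, Measurable (X i))
    (hindep : iIndepFun X μ) (hident : ∀ i, IdentDistrib (X i) (X 0) μ μ)
    (hgcont : Continuous g) (hghomog : ∀ t : ℝ, 0 < t → ∀ p : ℝ × ℝ, g (t • p) = t * g p)
    (hgmax : ∀ p : ℝ × ℝ, 0 ≤ p.1 → 0 ≤ p.2 → max p.1 p.2 ≤ g p)
    (hconv : ConvInProbOnto2 μ (sampleCloud2 X fun n => Real.log n) (limitSet g))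
    {δ : ℝ} {p : ℝ × ℝ} (hp : p ∈ Ioi 1 ×ˢ Ioo 0 δ) :
    ∀ᶠ k : ℕ in atTop, 4⁻¹ * Real.exp (-(k * g p)) ≤
      μ.real {ω | (k : ℝ) < (X 0 ω).1 ∧ (X 0 ω).2 ≤ k * δ} := by
  obtain ⟨hp1, hp2, hpδ⟩ : 1 < p.1 ∧ 0 < p.2 ∧ p.2 < δ := ⟨hp.1, hp.2.1, hp.2.2⟩
  have hgp : 0 < g p :=
    zero_lt_one.trans (hp1.trans_le ((le_max_left _ _).trans (hgmax p (by linarith) hp2.le)))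
  -- `log n / k` only approximates `g p`, so the scaling has to be controlled uniformly near it.
  obtain ⟨ε, hε, V, hV, hscaleV⟩ := exists_dist_lt_smul_mem (a := g p) (y := (g p)⁻¹ • p)
    (W := Ioi 1 ×ˢ Iio δ) <| by
      rw [smul_inv_smul₀ hgp.ne']
      exact (isOpen_Ioi.prod isOpen_Iio).mem_nhds ⟨hp1, hpδ⟩
  have hcloud := eventually_inv_lt_measureReal_smul_mem hXmeas hindep hident
    (isCompact_limitSet hgcont hgmax).isBounded hconv
    (inv_gauge_smul_mem_limitSet hghomog (by linarith) hp2.le hgp) hV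
  have hlin : Tendsto (fun k : ℕ => k * g p) atTop atTop :=
    tendsto_natCast_atTop_atTop.atTop_mul_const hgp
  have hn : Tendsto (fun k : ℕ => ⌈Real.exp (k * g p)⌉₊) atTop atTop :=
    tendsto_nat_ceil_atTop.comp (Real.tendsto_exp_atTop.comp hlin)
  filter_upwards [hn.eventually hcloud, eventually_gt_atTop 0,
    (tendsto_const_div_atTop_nhds_zero_nat (Real.log 2)).eventually (gt_mem_nhds hε)]
    with k hk hk0 hkε
  have hk0' : (0 : ℝ) < k := Nat.cast_pos.2 hk0
  set s := (k : ℝ) * g p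
  set n := ⌈Real.exp s⌉₊
  have hs0 : 0 ≤ s := by positivity
  have hlog_ge := le_log_natCeil_exp s
  have hratio : dist (Real.log n / k) (g p) < ε := by
    have hge : g p ≤ Real.log n / k := (le_div_iff₀ hk0').2 (by linarith [mul_comm (k : ℝ) (g p)])
    have hle : Real.log n / k ≤ g p + Real.log 2 / k := by
      rw [div_le_iff₀ hk0', add_mul, div_mul_cancel₀ _ hk0'.ne']
      linarith [mul_comm (k : ℝ) (g p), log_natCeil_exp_le hs0]
    rw [Real.dist_eq, abs_lt]
    constructor <;> linarith
  have hsub : {ω | (Real.log n)⁻¹ • X 0 ω ∈ V} ⊆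
      {ω | (k : ℝ) < (X 0 ω).1 ∧ (X 0 ω).2 ≤ k * δ} := by
    intro ω hω
    have hlogn : Real.log n ≠ 0 := (lt_of_lt_of_le (by positivity) hlog_ge).ne'
    have hscale : (Real.log n / k) • (Real.log n)⁻¹ • X 0 ω = (k : ℝ)⁻¹ • X 0 ω := by
      rw [smul_smul]; field_simp
    exact lt_fst_and_snd_le_of_inv_smul_mem hk0' (hscale ▸ hscaleV _ hratio _ hω)
  calc 4⁻¹ * Real.exp (-s) ≤ (2 * n : ℝ)⁻¹ := by
        rw [Real.exp_neg, ← mul_inv, inv_le_inv₀ (by positivity) (by positivity)]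
        linarith [natCeil_exp_le hs0]
    _ ≤ μ.real {ω | (Real.log n)⁻¹ • X 0 ω ∈ V} := hk.le
    _ ≤ μ.real {ω | (k : ℝ) < (X 0 ω).1 ∧ (X 0 ω).2 ≤ k * δ} := measureReal_mono hsub

lemma inv_sInf_gauge_eq_of_regVaryingAtTop (hXmeas : ∀ i, Measurable (X i))
    (hindep : iIndepFun X μ) (hident : ∀ i, IdentDistrib (X i) (X 0) μ μ)
    (hpos : ∀ᵐ ω ∂μ, 0 < (X 0 ω).2) (hgcont : Continuous g)
    (hghomog : ∀ t : ℝ, 0 < t → ∀ p : ℝ × ℝ, g (t • p) = t * g p)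
    (hgmax : ∀ p : ℝ × ℝ, 0 ≤ p.1 → 0 ≤ p.2 → max p.1 p.2 ≤ g p)
    (hconv : ConvInProbOnto2 μ (sampleCloud2 X fun n => Real.log n) (limitSet g))
    {δ τ : ℝ} (hδ : 0 ≤ δ)
    (hτ : RegVaryingAtTop (fun t => (μ {ω | t < Real.exp (X 0 ω).1 ∧
      Real.exp (X 0 ω).2 ≤ t ^ δ}).toReal) (-1 / τ)) :
    τ = (sInf ((fun γ => g (1, γ)) '' Icc 0 δ))⁻¹ := by
  set c := sInf ((fun γ => g (1, γ)) '' Icc 0 δ)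
  have hcompact : IsCompact ((fun γ => g (1, γ)) '' Icc 0 δ) :=
    isCompact_Icc.image (by fun_prop)
  obtain ⟨γ, hγ, hγc⟩ := hcompact.sInf_mem ((nonempty_Icc.2 hδ).image _)
  change g (1, γ) = c at hγc
  have hcg : ∀ γ ∈ Icc 0 δ, c ≤ g (1, γ) := fun γ hγ =>
    csInf_le hcompact.bddBelow (mem_image_of_mem _ hγ)
  have hc : 0 < c :=
    hγc ▸ zero_lt_one.trans_le ((le_max_left _ _).trans (hgmax (1, γ) zero_le_one hγ.1))
  have htail : ∀ k : ℕ, (μ {ω | Real.exp k < Real.exp (X 0 ω).1 ∧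
      Real.exp (X 0 ω).2 ≤ Real.exp k ^ δ}).toReal =
      μ.real {ω | (k : ℝ) < (X 0 ω).1 ∧ (X 0 ω).2 ≤ k * δ} := fun k => by
    simp only [← Real.exp_mul, Real.exp_lt_exp, Real.exp_le_exp, measureReal_def]
  have hlim := hτ.tendsto_log_comp_exp_div
  simp only [htail] at hlim
  rcases hδ.eq_or_lt with rfl | hδ
  · exact absurd hτ (not_regVaryingAtTop_tail_zero hpos)
  have hposk : ∀ᶠ k : ℕ in atTop, 0 < μ.real {ω | (k : ℝ) < (X 0 ω).1 ∧ (X 0 ω).2 ≤ k * δ} := by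
    filter_upwards [(Real.tendsto_exp_atTop.comp tendsto_natCast_atTop_atTop).eventually
      hτ.eventually_ne_zero] with k hk
    rw [Function.comp_apply, htail] at hk
    exact measureReal_nonneg.lt_of_ne' hk
  have hupper : -1 / τ ≤ -c := by
    have hθ : ∀ θ > 1, -1 / τ ≤ -(c / θ) := fun θ hθ =>
      le_of_tendsto_log_div_of_eventually_le hlim (tendsto_log_mul_exp_neg_div two_pos _) hposk
        (eventually_measureReal_tail_le hXmeas hindep hident hpos hgcont hghomog hgmax hconv
          hδ.le hc hcg hθ)
    exact le_neg_of_forall_one_lt_le_neg_div hθ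
  have hlower : -c ≤ -1 / τ := by
    have hquadrant : ∀ p ∈ Ioi 1 ×ˢ Ioo 0 δ, -g p ≤ -1 / τ := fun p hp =>
      le_of_tendsto_log_div_of_eventually_le (tendsto_log_mul_exp_neg_div (by norm_num) _) hlim
        (.of_forall fun k => by positivity)
        (eventually_exp_le_measureReal_tail hXmeas hindep hident hgcont hghomog hgmax hconv hp)
    have hcorner : ((1 : ℝ), γ) ∈ closure (Ioi 1 ×ˢ Ioo 0 δ) := by
      rw [closure_prod_eq, closure_Ioi, closure_Ioo hδ.ne]
      exact ⟨le_refl (1 : ℝ), hγ⟩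
    have hmem : -g (1, γ) ≤ -1 / τ := closure_minimal (t := {p | -g p ≤ -1 / τ}) hquadrant
      (isClosed_le hgcont.neg continuous_const) hcorner
    rwa [hγc] at hmem
  have hτc : τ⁻¹ = c := by
    rw [neg_div, one_div] at hupper hlower
    linarith
  rw [← hτc, inv_inv]

end Tail

lemma isometry_swap {α β : Type*} [PseudoMetricSpace α] [PseudoMetricSpace β] :
    Isometry (Prod.swap : α × β → β × α) :=
  Isometry.of_dist_eq fun a b => by simp [Prod.dist_eq, max_comm]

lemma sampleCloud2_swap {Ω : Type*} (X : ℕ → Ω → ℝ × ℝ) (r : ℕ → ℝ) (n : ℕ) (ω : Ω) :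
    sampleCloud2 (fun i ω => (X i ω).swap) r n ω = Prod.swap '' sampleCloud2 X r n ω := by
  ext y
  constructor
  · rintro ⟨i, h1, h2, rfl⟩
    exact ⟨_, ⟨i, h1, h2, rfl⟩, rfl⟩
  · rintro ⟨_, ⟨i, h1, h2, rfl⟩, rfl⟩
    exact ⟨i, h1, h2, rfl⟩

lemma limitSet_comp_swap (g : ℝ × ℝ → ℝ) :
    limitSet (g ∘ Prod.swap) = Prod.swap '' limitSet g := by
  rw [image_swap_eq_preimage_swap]
  ext p
  simp only [limitSet, mem_ofPred_eq, mem_preimage, Prod.fst_swap, Prod.snd_swap,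
    Function.comp_apply]
  tauto

namespace ConvInProbOnto2

variable {Ω : Type*} [MeasurableSpace Ω] {μ : Measure Ω}

lemma image_of_isometry {N : ℕ → Ω → Set (ℝ × ℝ)} {G : Set (ℝ × ℝ)}
    (h : ConvInProbOnto2 μ N G) {Φ : ℝ × ℝ → ℝ × ℝ} (hΦ : Isometry Φ) :
    ConvInProbOnto2 μ (fun n ω => Φ '' N n ω) (Φ '' G) := by
  intro ε hε
  simpa only [Metric.hausdorffDist_image hΦ] using h ε hε

lemma swap {X : ℕ → Ω → ℝ × ℝ} {r : ℕ → ℝ} {g : ℝ × ℝ → ℝ}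
    (h : ConvInProbOnto2 μ (sampleCloud2 X r) (limitSet g)) :
    ConvInProbOnto2 μ (sampleCloud2 (fun i ω => (X i ω).swap) r) (limitSet (g ∘ Prod.swap)) := by
  have hswap := h.image_of_isometry isometry_swap
  rwa [← limitSet_comp_swap, ← funext₂ (sampleCloud2_swap X r)] at hswap

end ConvInProbOnto2

theorem tau_two_dimensional_via_gauge_general
    {Ω : Type*} [MeasurableSpace Ω] (μ : Measure Ω) [IsProbabilityMeasure μ]
    (X : ℕ → Ω → ℝ × ℝ) (hXmeas : ∀ i, Measurable (X i))
    -- i.i.d. copies with standard exponential margins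
    (hindep : iIndepFun X μ)
    (hident : ∀ i, Measure.map (X i) μ = Measure.map (X 0) μ)
    (hmarg1 : ∀ x : ℝ, 0 ≤ x → (μ {ω | x < (X 0 ω).1}).toReal = Real.exp (-x))
    (hmarg2 : ∀ x : ℝ, 0 ≤ x → (μ {ω | x < (X 0 ω).2}).toReal = Real.exp (-x))
    -- the gauge function g and its limit set G
    (g : ℝ × ℝ → ℝ) (hgcont : Continuous g)
    (hghomog : ∀ t : ℝ, 0 < t → ∀ p : ℝ × ℝ, g (t • p) = t * g p)
    (hgmax : ∀ p : ℝ × ℝ, 0 ≤ p.1 → 0 ≤ p.2 → max p.1 p.2 ≤ g p)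
    (G : Set (ℝ × ℝ)) (hG : G = {p : ℝ × ℝ | 0 ≤ p.1 ∧ 0 ≤ p.2 ∧ g p ≤ 1})
    (hconv : ConvInProbOnto2 μ (sampleCloud2 X fun n => Real.log n) G)
    -- the coefficients τ₁(δ), τ₂(δ), defined via Pareto margins X_P = exp X_E
    (δ : ℝ) (hδ0 : 0 ≤ δ)
    (τ₁ τ₂ : ℝ)
    (hτ₁ : ∀ x y : ℝ, 0 < x → 0 < y → RegVaryingAtTop
      (fun t => (μ {a | x * t < Real.exp ((X 0 a).1) ∧
        Real.exp ((X 0 a).2) ≤ y * t ^ δ}).toReal) (-1 / τ₁))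
    (hτ₂ : ∀ x y : ℝ, 0 < x → 0 < y → RegVaryingAtTop
      (fun t => (μ {a | x * t < Real.exp ((X 0 a).2) ∧
        Real.exp ((X 0 a).1) ≤ y * t ^ δ}).toReal) (-1 / τ₂)) :
    τ₁ = (sInf ((fun γ => g (1, γ)) '' Set.Icc 0 δ))⁻¹ ∧
    τ₂ = (sInf ((fun γ => g (γ, 1)) '' Set.Icc 0 δ))⁻¹ := by
  subst hG
  have hident' : ∀ i, IdentDistrib (X i) (X 0) μ μ := fun i =>
    ⟨(hXmeas i).aemeasurable, (hXmeas 0).aemeasurable, hident i⟩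
  have hpos1 : ∀ᵐ ω ∂μ, 0 < (X 0 ω).1 :=
    ae_of_measureReal_eq_one (measurableSet_lt measurable_const (hXmeas 0).fst)
      (by simpa [measureReal_def] using hmarg1 0 le_rfl)
  have hpos2 : ∀ᵐ ω ∂μ, 0 < (X 0 ω).2 :=
    ae_of_measureReal_eq_one (measurableSet_lt measurable_const (hXmeas 0).snd)
      (by simpa [measureReal_def] using hmarg2 0 le_rfl)
  refine ⟨inv_sInf_gauge_eq_of_regVaryingAtTop hXmeas hindep hident' hpos2 hgcont hghomog hgmax
    hconv hδ0 (by simpa using hτ₁ 1 1 one_pos one_pos), ?_⟩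
  exact inv_sInf_gauge_eq_of_regVaryingAtTop (X := fun i ω => (X i ω).swap) (g := g ∘ Prod.swap)
    (fun i => measurable_swap.comp (hXmeas i)) (hindep.comp _ fun _ => measurable_swap)
    (fun i => (hident' i).comp measurable_swap) hpos1 (hgcont.comp continuous_swap)
    (fun t ht p => hghomog t ht p.swap) (fun p h1 h2 => max_comm p.1 p.2 ▸ hgmax p.swap h2 h1)
    hconv.swap hδ0 (by simpa using hτ₂ 1 1 one_pos one_pos)

/-- Proposition 10 of the paper: in dimension `d = 2`, if the sample clouds
(scaled by `log n`) converge in probability onto the limit set `G` with gauge function `g` and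
the coefficients `τ₁(δ), τ₂(δ)` are well defined, then
`τ₁(δ) = [min_{γ ∈ [0,δ]} g(1,γ)]⁻¹` and `τ₂(δ) = [min_{γ ∈ [0,δ]} g(γ,1)]⁻¹`. -/
theorem tau_two_dimensional_via_gauge
    {Ω : Type*} [MeasurableSpace Ω] (μ : Measure Ω) [IsProbabilityMeasure μ]
    (X : ℕ → Ω → ℝ × ℝ) (hXmeas : ∀ i, Measurable (X i))
    -- i.i.d. copies with standard exponential margins
    (hindep : iIndepFun X μ)
    (hident : ∀ i, Measure.map (X i) μ = Measure.map (X 0) μ)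
    (hmarg1 : ∀ x : ℝ, 0 ≤ x → (μ {ω | x < (X 0 ω).1}).toReal = Real.exp (-x))
    (hmarg2 : ∀ x : ℝ, 0 ≤ x → (μ {ω | x < (X 0 ω).2}).toReal = Real.exp (-x))
    -- the gauge function g and its limit set G
    (g : ℝ × ℝ → ℝ) (hgcont : Continuous g)
    (hghomog : ∀ t : ℝ, 0 < t → ∀ p : ℝ × ℝ, g (t • p) = t * g p)
    (hgmax : ∀ p : ℝ × ℝ, 0 ≤ p.1 → 0 ≤ p.2 → max p.1 p.2 ≤ g p)
    (G : Set (ℝ × ℝ)) (hG : G = {p : ℝ × ℝ | 0 ≤ p.1 ∧ 0 ≤ p.2 ∧ g p ≤ 1})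
    (hconv : ConvInProbOnto2 μ (sampleCloud2 X fun n => Real.log n) G)
    -- the coefficients τ₁(δ), τ₂(δ), defined via Pareto margins X_P = exp X_E
    (δ : ℝ) (hδ0 : 0 ≤ δ) (hδ1 : δ ≤ 1)
    (τ₁ τ₂ : ℝ) (hτ₁0 : 0 < τ₁) (hτ₁1 : τ₁ ≤ 1) (hτ₂0 : 0 < τ₂) (hτ₂1 : τ₂ ≤ 1)
    (hτ₁ : ∀ x y : ℝ, 0 < x → 0 < y → RegVaryingAtTop
      (fun t => (μ {a | x * t < Real.exp ((X 0 a).1) ∧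
        Real.exp ((X 0 a).2) ≤ y * t ^ δ}).toReal) (-1 / τ₁))
    (hτ₂ : ∀ x y : ℝ, 0 < x → 0 < y → RegVaryingAtTop
      (fun t => (μ {a | x * t < Real.exp ((X 0 a).2) ∧
        Real.exp ((X 0 a).1) ≤ y * t ^ δ}).toReal) (-1 / τ₂)) :
    τ₁ = (sInf ((fun γ => g (1, γ)) '' Set.Icc 0 δ))⁻¹ ∧
    τ₂ = (sInf ((fun γ => g (γ, 1)) '' Set.Icc 0 δ))⁻¹ :=
  tau_two_dimensional_via_gauge_general μ X hXmeas hindep hident hmarg1 hmarg2 g hgcont hghomog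
    hgmax G hG hconv δ hδ0 τ₁ τ₂ hτ₁ hτ₂
end

section
/- Let g : [0,∞)^d → [0,∞) be continuous and positively 1-homogeneous. For nonempty C ⊆ D = {1,…,d} and δ ∈ [0,1], let B^1_{C,δ} = ∪_{i∈C} {x ∈ ℝ_+^d : x_i = 1, x_j ≥ 1 ∀ j ∈ C∖{i}, x_k ≤ δ ∀ k ∈ D∖C} and B^δ_{C,δ} = ∪_{i∈D∖C} {x ∈ ℝ_+^d : x_i = δ, x_j ≤ δ ∀ j ∈ (D∖C)∖{i}, x_k ≥ 1 ∀ k ∈ C}. Then min over B^1_{C,δ} ∪ B^δ_{C,δ} of g equals min over B^1_{C,δ} of g; specifically, for every x̃ ∈ B^δ_{C,δ} one has g(x̃) ≥ min_{y ∈ B^1_{C,δ}} g(y), because g(x̃) = x̃_l g(x̃/x̃_l) with x̃_l = min_{k∈C} x̃_k ≥ 1 and x̃/x̃_l ∈ B^1_{C,δ}. -/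
open Filter Topology

/-- The part `B¹_{C,δ}` of the boundary of `R_{C,δ}` where some coordinate in `C` equals 1. -/
def Bone {d : ℕ} (C : Finset (Fin d)) (δ : ℝ) : Set (Fin d → ℝ) :=
  ⋃ i ∈ C, {x : Fin d → ℝ | (∀ j, 0 ≤ x j) ∧ x i = 1 ∧
    (∀ j ∈ C, j ≠ i → 1 ≤ x j) ∧ ∀ k ∉ C, x k ≤ δ}

/-- The part `B^δ_{C,δ}` of the boundary of `R_{C,δ}` where some coordinate outside `C`
equals `δ`. -/
def Bdelta {d : ℕ} (C : Finset (Fin d)) (δ : ℝ) : Set (Fin d → ℝ) :=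
  ⋃ i ∈ Cᶜ, {x : Fin d → ℝ | (∀ j, 0 ≤ x j) ∧ x i = δ ∧
    (∀ j ∉ C, j ≠ i → x j ≤ δ) ∧ ∀ k ∈ C, 1 ≤ x k}

/-! Rescaling `x ∈ B^δ_{C,δ}` by its smallest coordinate in `C`, which is at least `1`, lands
in `B¹_{C,δ}`; by homogeneity this divides `g x` by a factor `≥ 1`, and `g ≥ 1` on `B¹_{C,δ}`. So every
value of `g` on `B^δ_{C,δ}` is dominated by a value on `B¹_{C,δ}`, which leaves the infimum
unchanged. -/

theorem csInf_union_eq_left_of_forall_exists_le {α : Type*} [ConditionallyCompleteLattice α]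
    {s t : Set α} (hs : BddBelow s) (hts : ∀ b ∈ t, ∃ a ∈ s, a ≤ b) :
    sInf (s ∪ t) = sInf s := by
  rcases t.eq_empty_or_nonempty with rfl | ⟨b, hb⟩
  · rw [Set.union_empty]
  obtain ⟨a, ha, -⟩ := hts b hb
  have ht : BddBelow t := by
    obtain ⟨m, hm⟩ := hs
    exact ⟨m, fun b hb => (hts b hb).elim fun a ⟨ha, hab⟩ => (hm ha).trans hab⟩
  have hst : sInf s ≤ sInf t := le_csInf ⟨b, hb⟩ fun b hb =>
    (hts b hb).elim fun a ⟨ha, hab⟩ => (csInf_le hs ha).trans hab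
  rw [csInf_union hs ⟨a, ha⟩ ht ⟨b, hb⟩, inf_of_le_left hst]

section Boundary

variable {d : ℕ} {C : Finset (Fin d)} {δ : ℝ}

theorem one_le_of_mem_Bone {g : (Fin d → ℝ) → ℝ}
    (hgmax : ∀ x : Fin d → ℝ, (∀ j, 0 ≤ x j) → ∀ j, x j ≤ g x)
    {y : Fin d → ℝ} (hy : y ∈ Bone C δ) : 1 ≤ g y := by
  simp only [Bone, Set.mem_iUnion, Set.mem_ofPred_eq] at hy
  obtain ⟨i, -, hnonneg, hi, -⟩ := hy
  exact hi ▸ hgmax y hnonneg i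

theorem exists_inv_smul_mem_Bone_of_mem_Bdelta (hC : C.Nonempty) {x : Fin d → ℝ}
    (hx : x ∈ Bdelta C δ) : ∃ t : ℝ, 1 ≤ t ∧ t⁻¹ • x ∈ Bone C δ := by
  simp only [Bdelta, Set.mem_iUnion, Set.mem_ofPred_eq] at hx
  obtain ⟨i, -, hnonneg, hxi, hout, hin⟩ := hx
  obtain ⟨l, hlC, hlmin⟩ := C.exists_min_image x hC
  have hl : 1 ≤ x l := hin l hlC
  have hl0 : 0 < x l := one_pos.trans_le hl
  have hout' : ∀ k ∉ C, x k ≤ δ := fun k hk =>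
    if hki : k = i then hki ▸ hxi.le else hout k hk hki
  refine ⟨x l, hl, ?_⟩
  simp only [Bone, Set.mem_iUnion, Set.mem_ofPred_eq, Pi.smul_apply, smul_eq_mul]
  refine ⟨l, hlC, fun j => mul_nonneg (inv_nonneg.2 hl0.le) (hnonneg j),
    inv_mul_cancel₀ hl0.ne', fun j hj _ => ?_, fun k hk => ?_⟩
  · rw [le_inv_mul_iff₀ hl0, mul_one]
    exact hlmin j hj
  · exact (mul_le_of_le_one_left (hnonneg k) (inv_le_one_of_one_le₀ hl)).trans (hout' k hk)

theorem exists_mem_Bone_le_of_mem_Bdelta {g : (Fin d → ℝ) → ℝ}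
    (hghomog : ∀ t : ℝ, 0 < t → ∀ x, g (t • x) = t * g x)
    (hgmax : ∀ x : Fin d → ℝ, (∀ j, 0 ≤ x j) → ∀ j, x j ≤ g x)
    (hC : C.Nonempty) {x : Fin d → ℝ} (hx : x ∈ Bdelta C δ) :
    ∃ y ∈ Bone C δ, g y ≤ g x := by
  obtain ⟨t, ht, hy⟩ := exists_inv_smul_mem_Bone_of_mem_Bdelta hC hx
  have ht0 : 0 < t := one_pos.trans_le ht
  refine ⟨t⁻¹ • x, hy, ?_⟩
  calc g (t⁻¹ • x) ≤ t * g (t⁻¹ • x) :=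
        le_mul_of_one_le_left (zero_le_one.trans (one_le_of_mem_Bone hgmax hy)) ht
    _ = g x := by rw [← hghomog t ht0, smul_inv_smul₀ ht0.ne']

end Boundary

theorem min_union_boundary_eq_min_Bone_general
    {d : ℕ}
    (g : (Fin d → ℝ) → ℝ)
    (hghomog : ∀ t : ℝ, 0 < t → ∀ x, g (t • x) = t * g x)
    (hgmax : ∀ x : Fin d → ℝ, (∀ j, 0 ≤ x j) → ∀ j, x j ≤ g x)
    (C : Finset (Fin d)) (hC : C.Nonempty)
    (δ : ℝ) :
    sInf (g '' (Bone C δ ∪ Bdelta C δ)) = sInf (g '' Bone C δ) ∧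
    ∀ x ∈ Bdelta C δ, sInf (g '' Bone C δ) ≤ g x := by
  have hbdd : BddBelow (g '' Bone C δ) :=
    ⟨1, Set.forall_mem_image.2 fun _ hy => one_le_of_mem_Bone hgmax hy⟩
  have hdom : ∀ x ∈ Bdelta C δ, ∃ y ∈ Bone C δ, g y ≤ g x :=
    fun _ hx => exists_mem_Bone_le_of_mem_Bdelta hghomog hgmax hC hx
  refine ⟨?_, fun x hx => ?_⟩
  · rw [Set.image_union]
    refine csInf_union_eq_left_of_forall_exists_le hbdd ?_
    rintro _ ⟨x, hx, rfl⟩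
    obtain ⟨y, hy, hyx⟩ := hdom x hx
    exact ⟨g y, Set.mem_image_of_mem g hy, hyx⟩
  · obtain ⟨y, hy, hyx⟩ := hdom x hx
    exact (csInf_le hbdd (Set.mem_image_of_mem g hy)).trans hyx

/-- part of the proof of Proposition 11: for a continuous, positively
`1`-homogeneous gauge function `g` (bounding the coordinates on the positive orthant),
the minimum of `g` over `B¹_{C,δ} ∪ B^δ_{C,δ}` equals the minimum over `B¹_{C,δ}`;
specifically every `x̃ ∈ B^δ_{C,δ}` satisfies `g(x̃) ≥ min_{y ∈ B¹_{C,δ}} g(y)`,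
because `g(x̃) = x̃ₗ g(x̃ / x̃ₗ)` with `x̃ₗ = min_{k ∈ C} x̃ₖ ≥ 1` and `x̃ / x̃ₗ ∈ B¹_{C,δ}`. -/
theorem min_union_boundary_eq_min_Bone
    {d : ℕ} (hd : 0 < d)
    (g : (Fin d → ℝ) → ℝ) (hgcont : Continuous g)
    (hghomog : ∀ t : ℝ, 0 < t → ∀ x, g (t • x) = t * g x)
    (hgmax : ∀ x : Fin d → ℝ, (∀ j, 0 ≤ x j) → ∀ j, x j ≤ g x)
    (C : Finset (Fin d)) (hC : C.Nonempty)
    (δ : ℝ) (hδ0 : 0 ≤ δ) (hδ1 : δ ≤ 1) :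
    sInf (g '' (Bone C δ ∪ Bdelta C δ)) = sInf (g '' Bone C δ) ∧
    ∀ x ∈ Bdelta C δ, sInf (g '' Bone C δ) ≤ g x :=
  min_union_boundary_eq_min_Bone_general g hghomog hgmax C hC δ
end
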